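/- arXiv:1910.07245 — 3 statements merged into one kernel-verified Lean document; each statement's English description precedes it below -/
import Mathlib

section
/- Let w be a weight on ℝⁿ and p > 0. Suppose there exist constants 0 < C < 1 and 0 < λ₀ < 1 such that for every bounded measurable set E of positive measure, ∫(Mχ_E)^p w ≤ C ∫(Mχ_{{Mχ_E>λ₀}})^p w. Then there exist C' > 0 and δ > 0 such that for every bounded measurable set E of positive measure and every λ ∈ (0,1), w(E) ≤ C' λ^δ ∫(Mχ_{{Mχ_E>λ}})^p w. One may take δ = log C / log(λ₀/9^n). -/
open MeasureTheory Metric Set Bornology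
open scoped ENNReal

/-- The uncentered Hardy–Littlewood maximal operator over cubes (= closed balls in the
sup metric on `ℝⁿ = Fin n → ℝ`), acting on `ℝ≥0∞`-valued functions. -/
noncomputable def maximal {n : ℕ} (f : (Fin n → ℝ) → ℝ≥0∞) (x : Fin n → ℝ) : ℝ≥0∞ :=
  ⨆ (c : Fin n → ℝ) (r : ℝ) (_ : 0 < r) (_ : x ∈ closedBall c r),
    (volume (closedBall c r))⁻¹ * ∫⁻ y in closedBall c r, f y

/-- `Mχ_E`, the maximal function of the indicator of a set `E`. -/
noncomputable def maximalInd {n : ℕ} (E : Set (Fin n → ℝ)) (x : Fin n → ℝ) : ℝ≥0∞ :=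
  maximal (E.indicator 1) x

/-!
Almost every point of `E` is a Lebesgue density point, so `E ⊆ {Mχ_E > t}` up to a null set for
every `t < 1`; as `Mχ_G ≥ 1` on an open set `G`, this gives `w(E) ≤ I(t)`, where
`I(t) = ∫ (Mχ_{Mχ_E > t})^p w`.

A Vitali covering argument shows `α · Mχ_{Mχ_E > α} ≤ 12ⁿ Mχ_E`, so
`{Mχ_{Mχ_E > t} > λ₀} ⊆ {Mχ_E > q t}` with `q = λ₀ / 12ⁿ`, and the hypothesis applied to the
bounded open set `{Mχ_E > t}` yields `I(t) ≤ C · I(q t)`. Iterating from `[q, 1)` down to any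
`λ ∈ (0, 1)` and writing `C = q ^ δ` with `δ = log C / log q` gives `w(E) ≤ C⁻¹ λ^δ I(λ)`.
-/

open Filter Topology

lemma closedBall_subset_closedBall_three_mul {X : Type*} [PseudoMetricSpace X] {c c' y : X}
    {r r' : ℝ} (hy : y ∈ closedBall c r) (hy' : y ∈ closedBall c' r') (hr : r ≤ r') :
    closedBall c r ⊆ closedBall c' (3 * r') := fun z hz => by
  rw [mem_closedBall] at *
  linarith [dist_triangle4 z c y c', dist_comm c y]

section Maximal

variable {n : ℕ}

lemma volume_closedBall_mul (c : Fin n → ℝ) {k : ℝ} (hk : 0 < k) (r : ℝ) :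
    volume (closedBall c (k * r)) = ENNReal.ofReal k ^ n * volume (closedBall c r) := by
  rcases lt_or_ge r 0 with hr | hr
  · simp [closedBall_eq_empty.2 hr, closedBall_eq_empty.2 (mul_neg_of_pos_of_neg hk hr)]
  · rw [Measure.addHaar_closedBall_mul _ _ hk.le hr, Module.finrank_fin_fun,
      ENNReal.ofReal_pow hk.le, Measure.addHaar_closedBall_center volume c r]

lemma maximalInd_eq {E : Set (Fin n → ℝ)} (hE : MeasurableSet E) (x : Fin n → ℝ) :
    maximalInd E x = ⨆ (c : Fin n → ℝ) (r : ℝ) (_ : 0 < r) (_ : x ∈ closedBall c r),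
      volume (E ∩ closedBall c r) / volume (closedBall c r) := by
  simp only [maximalInd, maximal, lintegral_indicator_one hE, Measure.restrict_apply hE,
    ENNReal.div_eq_inv_mul]

lemma volume_inter_div_le_maximalInd {E : Set (Fin n → ℝ)} (hE : MeasurableSet E)
    {c x : Fin n → ℝ} {r : ℝ} (hr : 0 < r) (hx : x ∈ closedBall c r) :
    volume (E ∩ closedBall c r) / volume (closedBall c r) ≤ maximalInd E x := by
  rw [maximalInd_eq hE]
  exact le_iSup₂_of_le c r (le_iSup₂_of_le (f := fun _ _ => _) hr hx le_rfl)

lemma maximalInd_le {E : Set (Fin n → ℝ)} (hE : MeasurableSet E) {x : Fin n → ℝ} {b : ℝ≥0∞}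
    (h : ∀ c r, 0 < r → x ∈ closedBall c r →
      volume (E ∩ closedBall c r) / volume (closedBall c r) ≤ b) :
    maximalInd E x ≤ b := by
  rw [maximalInd_eq hE]
  exact iSup₂_le fun c r => iSup₂_le (h c r)

lemma exists_mul_volume_lt_of_lt_maximalInd {E : Set (Fin n → ℝ)} (hE : MeasurableSet E)
    {x : Fin n → ℝ} {a : ℝ≥0∞} (h : a < maximalInd E x) :
    ∃ c r, 0 < r ∧ x ∈ closedBall c r ∧
      a * volume (closedBall c r) < volume (E ∩ closedBall c r) := by
  simp only [maximalInd_eq hE, lt_iSup_iff] at h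
  obtain ⟨c, r, hr, hx, h⟩ := h
  refine ⟨c, r, hr, hx, ?_⟩
  rwa [← ENNReal.lt_div_iff_mul_lt (.inl (measure_closedBall_pos _ _ hr).ne')
    (.inl measure_closedBall_lt_top.ne)]

lemma maximalInd_mono {E F : Set (Fin n → ℝ)} (hEF : E ⊆ F) (x : Fin n → ℝ) :
    maximalInd E x ≤ maximalInd F x := by
  refine iSup_mono fun c => iSup_mono fun r => iSup_mono fun hr => iSup_mono fun hx => ?_
  gcongr

lemma one_le_maximalInd_of_isOpen {G : Set (Fin n → ℝ)} (hG : IsOpen G) {x : Fin n → ℝ}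
    (hx : x ∈ G) : 1 ≤ maximalInd G x := by
  obtain ⟨ε, hε, hball⟩ := Metric.isOpen_iff.1 hG x hx
  have hsub : closedBall x (ε / 2) ⊆ G := (closedBall_subset_ball (by linarith)).trans hball
  have h := volume_inter_div_le_maximalInd hG.measurableSet (half_pos hε)
    (mem_closedBall_self (x := x) (half_pos hε).le)
  rwa [inter_eq_self_of_subset_right hsub, ENNReal.div_self
    (measure_closedBall_pos _ _ (half_pos hε)).ne' measure_closedBall_lt_top.ne] at h

lemma isOpen_setOf_lt_maximal (f : (Fin n → ℝ) → ℝ≥0∞) (a : ℝ≥0∞) :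
    IsOpen {x | a < maximal f x} := by
  refine isOpen_iff_mem_nhds.2 fun x hx => ?_
  simp only [mem_ofPred_eq, maximal, lt_iSup_iff] at hx
  obtain ⟨c, r, hr, hx, ha⟩ := hx
  set avg := (volume (closedBall c r))⁻¹ * ∫⁻ y in closedBall c r, f y
  -- enlarging the cube by a factor `k` divides the average by at most `k ^ n`
  have hlim : Tendsto (fun k : ℝ => (ENNReal.ofReal k ^ n)⁻¹ * avg) (𝓝[>] 1) (𝓝 avg) := by
    have hk : Tendsto (fun k : ℝ => (ENNReal.ofReal k ^ n)⁻¹) (𝓝[>] 1) (𝓝 1) := by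
      have hcont := (ENNReal.continuous_pow n).comp ENNReal.continuous_ofReal
      simpa using ((hcont.tendsto 1).inv).mono_left nhdsWithin_le_nhds
    simpa using ENNReal.Tendsto.mul_const hk (.inl one_ne_zero)
  obtain ⟨k, hka, hk1⟩ := ((hlim.eventually (lt_mem_nhds ha)).and self_mem_nhdsWithin).exists
  have hkr : r < k * r := lt_mul_left hr hk1
  refine mem_of_superset (isOpen_ball.mem_nhds
    (mem_ball.2 ((mem_closedBall.1 hx).trans_lt hkr))) fun z hz => ?_
  calc a < (ENNReal.ofReal k ^ n)⁻¹ * avg := hka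
    _ = (volume (closedBall c (k * r)))⁻¹ * ∫⁻ y in closedBall c r, f y := by
      rw [volume_closedBall_mul c (zero_lt_one.trans hk1), ENNReal.mul_inv (.inr
        measure_closedBall_lt_top.ne) (.inl (ENNReal.pow_ne_top ENNReal.ofReal_ne_top)), mul_assoc]
    _ ≤ (volume (closedBall c (k * r)))⁻¹ * ∫⁻ y in closedBall c (k * r), f y := by
      gcongr
    _ ≤ maximal f z := le_iSup₂_of_le c (k * r)
      (le_iSup₂_of_le (f := fun _ _ => _) (hr.trans hkr) (ball_subset_closedBall hz) le_rfl)

lemma isBounded_setOf_lt_maximalInd {E : Set (Fin n → ℝ)} (hE : IsBounded E) {l : ℝ}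
    (hl : 0 < l) : IsBounded {x | ENNReal.ofReal l < maximalInd E x} := by
  rcases n.eq_zero_or_pos with rfl | hn
  · exact Set.subsingleton_of_subsingleton.finite.isBounded
  obtain ⟨R, hR, hER⟩ := hE.subset_closedBall_lt 0 0
  set k := max 1 l⁻¹
  have hk : 0 < k := lt_max_of_lt_left one_pos
  refine (isBounded_closedBall (x := 0) (r := R + 2 * (k * R))).subset fun x hx => ?_
  by_contra hfar
  rw [mem_closedBall, not_le] at hfar
  refine (lt_irrefl _) (hx.trans_le ((maximalInd_mono hER x).trans
    (maximalInd_le measurableSet_closedBall fun c r hr hxc => ?_)))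
  rcases lt_or_ge r (k * R) with hrk | hrk
  · -- a cube through `x` of side less than `2 k R` misses the ball `closedBall 0 R`
    have hdisj : closedBall 0 R ∩ closedBall c r = ∅ := by
      refine eq_empty_of_forall_notMem fun z ⟨hz0, hzc⟩ => ?_
      rw [mem_closedBall] at hz0 hzc hxc
      linarith [dist_triangle4 x c z 0, dist_comm c z]
    simp [hdisj]
  calc volume (closedBall 0 R ∩ closedBall c r) / volume (closedBall c r)
      ≤ volume (closedBall (0 : Fin n → ℝ) R) / volume (closedBall c (k * R)) := by
        gcongr
        exact inter_subset_left
    _ = ENNReal.ofReal (k ^ n)⁻¹ := by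
        rw [volume_closedBall_mul c hk, Measure.addHaar_closedBall_center volume c,
          ENNReal.div_eq_inv_mul, ENNReal.mul_inv (.inr measure_closedBall_lt_top.ne)
          (.inl (ENNReal.pow_ne_top ENNReal.ofReal_ne_top)), mul_assoc, ENNReal.inv_mul_cancel
          (measure_closedBall_pos _ _ hR).ne' measure_closedBall_lt_top.ne, mul_one,
          ← ENNReal.ofReal_pow hk.le, ENNReal.ofReal_inv_of_pos (by positivity)]
    _ ≤ ENNReal.ofReal l := by
        refine ENNReal.ofReal_le_ofReal ((inv_anti₀ hk (le_self_pow₀ (le_max_left _ _)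
          hn.ne')).trans (inv_le_of_inv_le₀ hl (le_max_right _ _)))

lemma ae_le_setOf_lt_maximalInd {E : Set (Fin n → ℝ)} (hE : MeasurableSet E) {a : ℝ≥0∞}
    (ha : a < 1) : E ≤ᵐ[volume] {x | a < maximalInd E x} := by
  refine (ae_restrict_iff' hE).1 ((Besicovitch.ae_tendsto_measure_inter_div volume E).mono
    fun x hx => ?_)
  obtain ⟨ρ, hρa, hρ⟩ := ((hx.eventually (lt_mem_nhds ha)).and self_mem_nhdsWithin).exists
  exact hρa.trans_le (volume_inter_div_le_maximalInd hE hρ (mem_closedBall_self hρ.le))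

lemma mul_volume_biUnion_closedBall_le {ι : Type*} {E : Set (Fin n → ℝ)} (hE : MeasurableSet E)
    {a : ℝ≥0∞} (t : Set ι) (c : ι → Fin n → ℝ) (r : ι → ℝ) {R : ℝ} (hR : ∀ i ∈ t, r i ≤ R)
    (hdense : ∀ i ∈ t,
      a * volume (closedBall (c i) (r i)) < volume (E ∩ closedBall (c i) (r i))) :
    a * volume (⋃ i ∈ t, closedBall (c i) (r i)) ≤
      4 ^ n * volume (E ∩ ⋃ i ∈ t, closedBall (c i) (r i)) := by
  obtain ⟨u, hut, hdisj, hcover⟩ :=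
    Vitali.exists_disjoint_subfamily_covering_enlargement_closedBall t c r R hR 4 (by norm_num)
  have hdisj' : Pairwise (Function.onFun Disjoint fun j : u => closedBall (c j) (r j)) :=
    fun i j hij => hdisj i.2 j.2 (Subtype.coe_injective.ne hij)
  have hu : u.Countable := by
    have hpos : {j : u | 0 < volume (closedBall (c j) (r j))} = univ :=
      eq_univ_of_forall fun j => (zero_le.trans_lt (hdense j (hut j.2))).trans_le
        (measure_mono inter_subset_right)
    have := Measure.countable_meas_pos_of_disjoint_iUnion (μ := volume)
      (fun _ => measurableSet_closedBall) hdisj'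
    rw [hpos, countable_univ_iff] at this
    exact countable_coe_iff.1 this
  calc a * volume (⋃ i ∈ t, closedBall (c i) (r i))
      ≤ a * ∑' j : u, volume (closedBall (c j) (4 * r j)) := by
        gcongr
        refine (measure_mono (iUnion₂_subset fun i hi => ?_)).trans (measure_biUnion_le volume hu
          fun j => closedBall (c j) (4 * r j))
        obtain ⟨j, hj, hij⟩ := hcover i hi
        exact hij.trans (subset_biUnion_of_mem (u := fun j => closedBall (c j) (4 * r j)) hj)
    _ = 4 ^ n * ∑' j : u, a * volume (closedBall (c j) (r j)) := by
        simp only [volume_closedBall_mul _ four_pos, ENNReal.ofReal_ofNat, ENNReal.tsum_mul_left]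
        ring
    _ ≤ 4 ^ n * ∑' j : u, volume (E ∩ closedBall (c j) (r j)) := by
        gcongr with j
        exact (hdense j (hut j.2)).le
    _ ≤ 4 ^ n * volume (E ∩ ⋃ i ∈ t, closedBall (c i) (r i)) := by
        gcongr
        refine (tsum_meas_le_meas_iUnion_of_disjoint _ (fun _ => hE.inter measurableSet_closedBall)
          fun i j hij => (hdisj' hij).mono inter_subset_right inter_subset_right).trans
          (measure_mono (iUnion_subset fun j => ?_))
        exact inter_subset_inter_right _ (subset_biUnion_of_mem (u := fun i =>
          closedBall (c i) (r i)) (hut j.2))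

/-- The constant `12 ^ n = 3 ^ n * 4 ^ n`: Mathlib's Vitali covering lemma enlarges balls by a
factor `4 > 3`, and the covering cubes are then compared with the tripled cube. -/
theorem mul_maximalInd_setOf_lt_maximalInd_le {E : Set (Fin n → ℝ)} (hE : MeasurableSet E)
    (a : ℝ≥0∞) (x : Fin n → ℝ) :
    a * maximalInd {y | a < maximalInd E y} x ≤ 12 ^ n * maximalInd E x := by
  set G := {y | a < maximalInd E y}
  have hG : MeasurableSet G := (isOpen_setOf_lt_maximal _ a).measurableSet
  choose! c' r' hr' hyc' hdense using
    fun y (hy : y ∈ G) => exists_mul_volume_lt_of_lt_maximalInd hE hy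
  have h3n : (0 : ℝ≥0∞) < 3 ^ n := by positivity
  rw [maximalInd_eq hG]
  simp only [ENNReal.mul_iSup]
  refine iSup₂_le fun c r => iSup₂_le fun hr hx => ?_
  by_cases hbig : ∃ y ∈ G ∩ closedBall c r, r < r' y
  · -- a witnessing cube larger than `closedBall c r` and meeting it contains `x` once tripled
    obtain ⟨y, ⟨hyG, hyc⟩, hry⟩ := hbig
    have h3r : 0 < 3 * r' y := by linarith [hr' y hyG]
    have hx3 : x ∈ closedBall (c' y) (3 * r' y) :=
      closedBall_subset_closedBall_three_mul hyc (hyc' y hyG) hry.le hx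
    calc a * (volume (G ∩ closedBall c r) / volume (closedBall c r))
        ≤ a * 1 := by
          gcongr
          exact ENNReal.div_le_of_le_mul (by simpa using measure_mono inter_subset_right)
      _ = 3 ^ n * (a * volume (closedBall (c' y) (r' y))) /
            volume (closedBall (c' y) (3 * r' y)) := by
          rw [volume_closedBall_mul _ three_pos, ENNReal.ofReal_ofNat,
            ENNReal.mul_div_mul_left _ _ h3n.ne' (ENNReal.pow_ne_top (by norm_num)),
            ENNReal.mul_div_cancel_right (measure_closedBall_pos _ _ (hr' y hyG)).ne'
              measure_closedBall_lt_top.ne, mul_one]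
      _ ≤ 3 ^ n * (volume (E ∩ closedBall (c' y) (3 * r' y)) /
            volume (closedBall (c' y) (3 * r' y))) := by
          rw [mul_div_assoc]
          gcongr
          exact (hdense y hyG).le.trans (measure_mono (inter_subset_inter_right _
            (closedBall_subset_closedBall (by linarith [hr' y hyG]))))
      _ ≤ 12 ^ n * maximalInd E x := by
          gcongr
          · norm_num
          · exact volume_inter_div_le_maximalInd hE h3r hx3
  · -- otherwise the witnessing cubes all lie in `closedBall c (3 * r)`
    push Not at hbig
    have hsub : ⋃ y ∈ G ∩ closedBall c r, closedBall (c' y) (r' y) ⊆ closedBall c (3 * r) :=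
      iUnion₂_subset fun y hy =>
        closedBall_subset_closedBall_three_mul (hyc' y hy.1) hy.2 (hbig y hy)
    calc a * (volume (G ∩ closedBall c r) / volume (closedBall c r))
        ≤ a * volume (⋃ y ∈ G ∩ closedBall c r, closedBall (c' y) (r' y)) /
            volume (closedBall c r) := by
          rw [mul_div_assoc]
          gcongr
          exact fun y hy => mem_biUnion hy (hyc' y hy.1)
      _ ≤ 4 ^ n * volume (E ∩ closedBall c (3 * r)) / volume (closedBall c r) := by
          refine ENNReal.div_le_div_right ((mul_volume_biUnion_closedBall_le hE _ c' r' hbig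
            fun y hy => hdense y hy.1).trans ?_) _
          gcongr
      _ = 12 ^ n * (volume (E ∩ closedBall c (3 * r)) / volume (closedBall c (3 * r))) := by
          rw [volume_closedBall_mul c three_pos, ENNReal.ofReal_ofNat,
            show (12 : ℝ≥0∞) ^ n = 3 ^ n * 4 ^ n by rw [← mul_pow]; norm_num, ← mul_div_assoc,
            mul_assoc, ENNReal.mul_div_mul_left _ _ h3n.ne' (ENNReal.pow_ne_top (by norm_num))]
      _ ≤ 12 ^ n * maximalInd E x := by
          gcongr
          exact volume_inter_div_le_maximalInd hE (by positivity)
            (closedBall_subset_closedBall (by linarith) hx)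

end Maximal

section Weighted

variable {n : ℕ} (w : (Fin n → ℝ) → ℝ≥0∞) {p : ℝ}

lemma setLIntegral_le_lintegral_maximalInd_rpow_mul {G : Set (Fin n → ℝ)} (hG : IsOpen G)
    (hp : 0 ≤ p) : ∫⁻ x in G, w x ≤ ∫⁻ x, maximalInd G x ^ p * w x := by
  rw [← lintegral_indicator hG.measurableSet]
  refine lintegral_mono fun x => ?_
  by_cases hx : x ∈ G
  · rw [indicator_of_mem hx]
    refine le_mul_of_one_le_left zero_le ?_
    simpa using ENNReal.rpow_le_rpow (one_le_maximalInd_of_isOpen hG hx) hp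
  · simp [hx]

lemma lintegral_maximalInd_rpow_mul_mono (hp : 0 ≤ p) {E F : Set (Fin n → ℝ)} (hEF : E ⊆ F) :
    ∫⁻ x, maximalInd E x ^ p * w x ≤ ∫⁻ x, maximalInd F x ^ p * w x :=
  lintegral_mono fun x => by gcongr; exact maximalInd_mono hEF x

end Weighted

lemma setOf_lt_maximalInd_setOf_lt_maximalInd_subset {n : ℕ} {E : Set (Fin n → ℝ)}
    (hE : MeasurableSet E) (s : ℝ) {t : ℝ} (ht : 0 < t) :
    {y | ENNReal.ofReal s < maximalInd {z | ENNReal.ofReal t < maximalInd E z} y} ⊆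
      {y | ENNReal.ofReal (s / 12 ^ n * t) < maximalInd E y} := fun y hy => by
  have h := ((ENNReal.mul_lt_mul_iff_right (ENNReal.ofReal_pos.2 ht).ne'
    ENNReal.ofReal_ne_top).2 hy).trans_le (mul_maximalInd_setOf_lt_maximalInd_le hE _ y)
  calc ENNReal.ofReal (s / 12 ^ n * t) = ENNReal.ofReal t * ENNReal.ofReal s / 12 ^ n := by
        rw [mul_comm, ENNReal.ofReal_mul ht.le, ENNReal.ofReal_div_of_pos (by positivity),
          ENNReal.ofReal_pow (by norm_num), ENNReal.ofReal_ofNat, mul_div_assoc]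
    _ < maximalInd E y := ENNReal.div_lt_of_lt_mul' h

theorem le_inv_rpow_mul_rpow_mul_of_le_mul_comp {I : ℝ → ℝ≥0∞} {a : ℝ≥0∞} {q δ : ℝ}
    (hq0 : 0 < q) (hq1 : q < 1) (hδ : 0 ≤ δ) (base : ∀ t ∈ Ioo 0 1, a ≤ I t)
    (step : ∀ t ∈ Ioo 0 1, I t ≤ ENNReal.ofReal (q ^ δ) * I (q * t)) {l : ℝ}
    (hl : l ∈ Ioo 0 1) : a ≤ ENNReal.ofReal ((q ^ δ)⁻¹ * l ^ δ) * I l := by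
  have hqδ : 0 < q ^ δ := Real.rpow_pos_of_pos hq0 δ
  have hbase : ∀ l ∈ Ico q 1, a ≤ ENNReal.ofReal ((q ^ δ)⁻¹ * l ^ δ) * I l := fun l hl =>
    (base l ⟨hq0.trans_le hl.1, hl.2⟩).trans (le_mul_of_one_le_left zero_le
      (ENNReal.one_le_ofReal.2 ((one_le_inv_mul₀ hqδ).2 (Real.rpow_le_rpow hq0.le hl.1 hδ))))
  suffices ∀ k : ℕ, ∀ l ∈ Ico (q ^ (k + 1)) 1,
      a ≤ ENNReal.ofReal ((q ^ δ)⁻¹ * l ^ δ) * I l by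
    obtain ⟨k, hk⟩ := exists_pow_lt_of_lt_one hl.1 hq1
    exact this k l ⟨(pow_le_pow_of_le_one hq0.le hq1.le k.le_succ).trans hk.le, hl.2⟩
  intro k
  induction k with
  | zero => simpa using hbase
  | succ k ih =>
    intro l hl
    rcases le_or_gt q l with hql | hlq
    · exact hbase l ⟨hql, hl.2⟩
    have hlq' : l / q ∈ Ico (q ^ (k + 1)) 1 :=
      ⟨(le_div_iff₀ hq0).2 (by rw [← pow_succ]; exact hl.1), (div_lt_one hq0).2 hlq⟩
    have hl0 : 0 < l := (pow_pos hq0 _).trans_le hl.1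
    calc a ≤ ENNReal.ofReal ((q ^ δ)⁻¹ * (l / q) ^ δ) * I (l / q) := ih _ hlq'
      _ ≤ ENNReal.ofReal ((q ^ δ)⁻¹ * (l / q) ^ δ) * (ENNReal.ofReal (q ^ δ) * I (q * (l / q))) :=
        by gcongr; exact step _ ⟨div_pos hl0 hq0, hlq'.2⟩
      _ = ENNReal.ofReal ((q ^ δ)⁻¹ * l ^ δ) * I l := by
        rw [← mul_assoc, ← ENNReal.ofReal_mul (by positivity), mul_div_cancel₀ _ hq0.ne',
          Real.div_rpow hl0.le hq0.le]
        congr 2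
        field_simp

/-- Suppose there are `0 < C < 1` and `0 < lam0 < 1` such that for every bounded
measurable `E` of positive measure,
`∫(Mχ_E)^p w ≤ C ∫(Mχ_{{Mχ_E>lam0}})^p w`. Then there are `C' > 0` and `δ > 0` such
that for all such `E` and every `λ ∈ (0,1)`,
`w(E) ≤ C' λ^δ ∫(Mχ_{{Mχ_E>λ}})^p w`. -/
theorem stmt7 {n : ℕ} (w : (Fin n → ℝ) → ℝ≥0∞) (p : ℝ) (hp : 0 < p)
    (C lam0 : ℝ) (hC0 : 0 < C) (hC1 : C < 1) (hlam0 : 0 < lam0) (hlam1 : lam0 < 1)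
    (h : ∀ E : Set (Fin n → ℝ), MeasurableSet E → IsBounded E → 0 < volume E →
      ∫⁻ x, (maximalInd E x) ^ p * w x ≤
        ENNReal.ofReal C *
          ∫⁻ x, (maximalInd {y | ENNReal.ofReal lam0 < maximalInd E y} x) ^ p * w x) :
    ∃ C' > (0:ℝ), ∃ δ > (0:ℝ),
      ∀ E : Set (Fin n → ℝ), MeasurableSet E → IsBounded E → 0 < volume E →
        ∀ l : ℝ, 0 < l → l < 1 →
          ∫⁻ x in E, w x ≤ ENNReal.ofReal (C' * l ^ δ) *
            ∫⁻ x, (maximalInd {y | ENNReal.ofReal l < maximalInd E y} x) ^ p * w x := by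
  set q : ℝ := lam0 / 12 ^ n
  have hq0 : 0 < q := by positivity
  have hq1 : q < 1 := (div_lt_one (by positivity)).2 (hlam1.trans_le (one_le_pow₀ (by norm_num)))
  have hqδ : q ^ (Real.log C / Real.log q) = C := by
    rw [Real.rpow_def_of_pos hq0, mul_div_cancel₀ _ (Real.log_neg hq0 hq1).ne, Real.exp_log hC0]
  have hδ : 0 < Real.log C / Real.log q :=
    div_pos_of_neg_of_neg (Real.log_neg hC0 hC1) (Real.log_neg hq0 hq1)
  refine ⟨C⁻¹, inv_pos.2 hC0, _, hδ, fun E hE hEb hEpos l hl0 hl1 => ?_⟩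
  set I : ℝ → ℝ≥0∞ := fun t => ∫⁻ x, maximalInd {y | ENNReal.ofReal t < maximalInd E y} x ^ p * w x
  have hsub (t : ℝ) (ht : t < 1) : E ≤ᵐ[volume] {y | ENNReal.ofReal t < maximalInd E y} :=
    ae_le_setOf_lt_maximalInd hE (ENNReal.ofReal_lt_one.2 ht)
  have base (t : ℝ) (ht : t ∈ Ioo 0 1) : ∫⁻ x in E, w x ≤ I t :=
    (lintegral_mono_set' (hsub t ht.2)).trans
      (setLIntegral_le_lintegral_maximalInd_rpow_mul w (isOpen_setOf_lt_maximal _ _) hp.le)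
  have step (t : ℝ) (ht : t ∈ Ioo 0 1) :
      I t ≤ ENNReal.ofReal (q ^ (Real.log C / Real.log q)) * I (q * t) := by
    rw [hqδ]
    refine (h _ (isOpen_setOf_lt_maximal _ _).measurableSet (isBounded_setOf_lt_maximalInd hEb ht.1)
      (hEpos.trans_le (measure_mono_ae (hsub t ht.2)))).trans ?_
    gcongr _ * ?_
    exact lintegral_maximalInd_rpow_mul_mono w hp.le
      (setOf_lt_maximalInd_setOf_lt_maximalInd_subset hE lam0 ht.1)
  have := le_inv_rpow_mul_rpow_mul_of_le_mul_comp hq0 hq1 hδ.le base step ⟨hl0, hl1⟩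
  rwa [hqδ] at this
end

section
/- Let w be a weight, p > 0, and suppose the SC_p condition holds with exponent r > 1. Let f be locally integrable, let 𝒮 be an η-sparse family in a dyadic lattice, and define F_k = {Q ∈ 𝒮 : 4^{-k-1} < |f|_Q ≤ 4^{-k}} for k ∈ ℕ, with maximal cubes {Q_j^k} of F_k. Then the weak-type sparse bound holds: ‖A_𝒮 f‖_{L^{p,∞}(w)} ≤ C ‖Mf‖_{L^p(w)}, where A_𝒮 f = Σ_{Q∈𝒮} (|f|_Q) χ_Q and |f|_Q = (1/|Q|)∫_Q |f|. -/
open MeasureTheory Metric Set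
open scoped ENNReal

/-- The `SC_p` condition with exponent `r` and constant `C₀`: for every (countable)
family of pairwise disjoint cubes `{Q_j}`,
`Σ_j ((1/|Q_j|)∫_{Q_j} w^r)^{1/r} |Q_j| ≤ C₀ ∫ (Mχ_{∪_j Q_j})^p w`. -/
def SCp {n : ℕ} (w : (Fin n → ℝ) → ℝ≥0∞) (p r : ℝ) (C₀ : ℝ≥0∞) : Prop :=
  ∀ (J : Set ℕ) (c : ℕ → Fin n → ℝ) (ρ : ℕ → ℝ),
    (∀ j ∈ J, 0 < ρ j) →
    (J.PairwiseDisjoint fun j => closedBall (c j) (ρ j)) →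
    ∑' j : J, ((volume (closedBall (c j) (ρ j)))⁻¹ *
        ∫⁻ y in closedBall (c j) (ρ j), (w y) ^ r) ^ (1/r) *
          volume (closedBall (c j) (ρ j)) ≤
      C₀ * ∫⁻ x, (maximalInd (⋃ j ∈ J, closedBall (c j) (ρ j)) x) ^ p * w x

/-- The sparse operator `A_𝒮 f = Σ_{Q∈𝒮} (1/|Q|)(∫_Q |f|) χ_Q` for a family of
cubes `{Q_j}_{j∈J}`. -/
noncomputable def sparseOp {n : ℕ} (J : Set ℕ) (Q : ℕ → Set (Fin n → ℝ))
    (f : (Fin n → ℝ) → ℝ) (x : Fin n → ℝ) : ℝ≥0∞ :=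
  ∑' j : J, ((volume (Q j))⁻¹ * ∫⁻ y in Q j, (‖f y‖₊ : ℝ≥0∞)) * (Q j).indicator 1 x

/-!
Sort the cubes of a finite subfamily by level: `F_k` collects those on which the average of `|f|`
lies in `(4^{-k-1} t, 4^{-k} t]`. A point where the sparse sum exceeds `2 b t` lies either in a cube
with average `> t` or, for some `k`, in more than `b (k + 1)` nested cubes of `F_k`.

Inside a maximal cube of a nested `η`-sparse family, the points of depth `> m` fill at most the
fraction `(1 - η)^m`, so by Hölder their `w`-measure is at most `(1 - η)^{m/r'}` times
`⟨w^r⟩^{1/r} |Q|`. Summing over the disjoint maximal cubes with `SC_p`, and dominating `Mχ` of their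
union by `3ⁿ M f / γ` when all averages are `≥ γ`, bounds the `w`-measure of the depth `> m` layer
by `(1 - η)^{m/r'} C₀ (3ⁿ/γ)^p ∫ (M f)^p w`. With `γ = 4^{-k-1} t` and `m = b (k + 1)`, where `b`
is so large that `(1 - η)^{b/r'} 4^p < 1`, the levels contribute a convergent geometric series.
-/

open scoped Classical

section NestedFamily

variable {ι α : Type*} {Q : ι → Set α}

def IsNested (J : Set ι) (Q : ι → Set α) : Prop :=
  ∀ i ∈ J, ∀ j ∈ J, Q i ⊆ Q j ∨ Q j ⊆ Q i ∨ Disjoint (Q i) (Q j)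

lemma IsNested.mono {J K : Set ι} (h : IsNested J Q) (hKJ : K ⊆ J) : IsNested K Q :=
  fun i hi j hj => h i (hKJ hi) j (hKJ hj)

lemma IsNested.subset_or_subset {J : Set ι} (h : IsNested J Q) {i j : ι} (hi : i ∈ J)
    (hj : j ∈ J) {x : α} (hxi : x ∈ Q i) (hxj : x ∈ Q j) : Q i ⊆ Q j ∨ Q j ⊆ Q i :=
  (h i hi j hj).imp_right fun h => h.resolve_right (not_disjoint_iff.2 ⟨x, hxi, hxj⟩)

noncomputable def depth (Q : ι → Set α) (G : Finset ι) (j : ι) : ℕ :=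
  (G.filter fun i => Q j ⊆ Q i).card

noncomputable def depthSet (Q : ι → Set α) (G : Finset ι) (m : ℕ) : Set α :=
  ⋃ j ∈ G.filter fun j => m ≤ depth Q G j, Q j

variable {G : Finset ι} {i j : ι}

lemma mem_depthSet {x : α} {m : ℕ} :
    x ∈ depthSet Q G m ↔ ∃ j ∈ G, m ≤ depth Q G j ∧ x ∈ Q j := by
  simp only [depthSet, mem_iUnion, Finset.mem_filter, exists_prop, and_assoc]

lemma one_le_depth (hj : j ∈ G) : 1 ≤ depth Q G j :=
  Finset.card_pos.2 ⟨j, Finset.mem_filter.2 ⟨hj, subset_rfl⟩⟩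

lemma depth_le_depth (h : Q j ⊆ Q i) : depth Q G i ≤ depth Q G j :=
  Finset.card_le_card <| Finset.monotone_filter_right G fun _ _ => h.trans

lemma depth_lt_depth (hi : i ∈ G) (h : Q i ⊂ Q j) : depth Q G j < depth Q G i := by
  refine Finset.card_lt_card ⟨Finset.monotone_filter_right G fun _ _ => h.subset.trans, ?_⟩
  intro hsub
  exact h.not_subset (Finset.mem_filter.1 (hsub (Finset.mem_filter.2 ⟨hi, subset_rfl⟩))).2

lemma subset_of_depth_eq_one (hnest : IsNested (G : Set ι) Q) (hi : i ∈ G) (hj : j ∈ G)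
    (hj1 : depth Q G j = 1) {x : α} (hxi : x ∈ Q i) (hxj : x ∈ Q j) : Q i ⊆ Q j := by
  rcases hnest.subset_or_subset hi hj hxi hxj with hij | hji
  · exact hij
  by_contra hij
  have := depth_lt_depth (G := G) hj ⟨hji, hij⟩
  have := one_le_depth (Q := Q) hi
  omega

lemma disjoint_of_depth_eq (hinj : InjOn Q G) (hnest : IsNested (G : Set ι) Q) (hi : i ∈ G)
    (hj : j ∈ G) (hij : i ≠ j) (h : depth Q G i = depth Q G j) : Disjoint (Q i) (Q j) := by
  refine not_not.1 fun hd => ?_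
  obtain ⟨x, hxi, hxj⟩ := not_disjoint_iff.1 hd
  have hne : Q i ≠ Q j := fun hQ => hij (hinj hi hj hQ)
  rcases hnest.subset_or_subset hi hj hxi hxj with hs | hs
  · exact (depth_lt_depth hi (hs.ssubset_of_ne hne)).ne' h
  · exact (depth_lt_depth hj (hs.ssubset_of_ne hne.symm)).ne h

lemma pairwiseDisjoint_of_depth_eq (hinj : InjOn Q G) (hnest : IsNested (G : Set ι) Q)
    {R : Finset ι} (hRG : R ⊆ G) {m : ℕ} (hR : ∀ t ∈ R, depth Q G t = m) :
    (R : Set ι).PairwiseDisjoint Q := fun i hi j hj hij =>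
  disjoint_of_depth_eq hinj hnest (hRG hi) (hRG hj) hij ((hR i hi).trans (hR j hj).symm)

/-- The members of `G` containing `Q j` form a chain, on which the depth is injective with values
in `[1, depth Q G j]`, hence onto. -/
lemma exists_depth_eq (hinj : InjOn Q G) (hnest : IsNested (G : Set ι) Q)
    (hne : (Q j).Nonempty) {m : ℕ} (hm1 : 1 ≤ m) (hm : m ≤ depth Q G j) :
    ∃ t ∈ G, depth Q G t = m ∧ Q j ⊆ Q t := by
  obtain ⟨x, hx⟩ := hne
  set C := G.filter fun i => Q j ⊆ Q i
  have hCG : C ⊆ G := Finset.filter_subset _ _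
  have hmaps : ∀ t ∈ C, depth Q G t ∈ Finset.Icc 1 C.card := fun t ht =>
    Finset.mem_Icc.2 ⟨one_le_depth (hCG ht), depth_le_depth (Finset.mem_filter.1 ht).2⟩
  have hinjC : ∀ a b, a ∈ C → b ∈ C → depth Q G a = depth Q G b → a = b := by
    intro a b ha hb hab
    by_contra hne
    exact (disjoint_of_depth_eq hinj hnest (hCG ha) (hCG hb) hne hab).ne_of_mem
      ((Finset.mem_filter.1 ha).2 hx) ((Finset.mem_filter.1 hb).2 hx) rfl
  obtain ⟨t, htC, hmt⟩ := Finset.surj_on_of_inj_on_of_card_le (fun a _ => depth Q G a) hmaps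
    hinjC (by simp) m (Finset.mem_Icc.2 ⟨hm1, hm⟩)
  exact ⟨t, hCG htC, hmt.symm, (Finset.mem_filter.1 htC).2⟩

lemma exists_depth_eq_of_mem_depthSet (hinj : InjOn Q G) (hnest : IsNested (G : Set ι) Q)
    (hne : ∀ j ∈ G, (Q j).Nonempty) {m k : ℕ} (hm : 1 ≤ m) (hmk : m ≤ k) {x : α}
    (hx : x ∈ depthSet Q G k) : ∃ t ∈ G, depth Q G t = m ∧ x ∈ Q t := by
  obtain ⟨j, hj, hkj, hxj⟩ := mem_depthSet.1 hx
  obtain ⟨t, ht, htm, hjt⟩ := exists_depth_eq hinj hnest (hne j hj) hm (hmk.trans hkj)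
  exact ⟨t, ht, htm, hjt hxj⟩

/-- The members of `G` containing `x` form a chain, so their number is the depth of the
smallest of them. -/
lemma card_filter_mem_le (hnest : IsNested (G : Set ι) Q) {x : α} {N : ℕ}
    (hx : x ∉ depthSet Q G (N + 1)) : (G.filter fun j => x ∈ Q j).card ≤ N := by
  set C := G.filter fun j => x ∈ Q j
  rcases C.eq_empty_or_nonempty with hC | hC
  · simp [hC]
  obtain ⟨s, hsC, hmax⟩ := Finset.exists_max_image C (depth Q G) hC
  obtain ⟨hs, hxs⟩ := Finset.mem_filter.1 hsC
  have hCs : C ⊆ G.filter fun i => Q s ⊆ Q i := by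
    intro b hbC
    obtain ⟨hb, hxb⟩ := Finset.mem_filter.1 hbC
    refine Finset.mem_filter.2 ⟨hb, ?_⟩
    rcases hnest.subset_or_subset hs hb hxs hxb with hsb | hbs
    · exact hsb
    by_contra hsb
    exact not_le.2 (depth_lt_depth hb ⟨hbs, hsb⟩) (hmax b hbC)
  have hsN : depth Q G s ≤ N := by
    by_contra h
    exact hx (mem_depthSet.2 ⟨s, hs, by omega, hxs⟩)
  exact (Finset.card_le_card hCs).trans hsN

lemma depthSet_inter_subset (hnest : IsNested (G : Set ι) Q) {t : ι} (ht : t ∈ G) :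
    depthSet Q G (depth Q G t + 1) ∩ Q t ⊆ ⋃ i ∈ {i ∈ (G : Set ι) | Q i ⊂ Q t}, Q i := by
  rintro x ⟨hx, hxt⟩
  obtain ⟨j, hj, hdj, hxj⟩ := mem_depthSet.1 hx
  have hjt : ¬ Q t ⊆ Q j := fun h => by have := depth_le_depth (G := G) h; omega
  have hjt' : Q j ⊂ Q t := ⟨(hnest.subset_or_subset hj ht hxj hxt).resolve_right hjt, hjt⟩
  exact mem_biUnion (show j ∈ {i ∈ (G : Set ι) | Q i ⊂ Q t} from ⟨hj, hjt'⟩) hxj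

end NestedFamily

section Sparse

variable {ι X : Type*} [MeasurableSpace X] {μ : Measure X} {Q : ι → Set X} {ε : ℝ≥0∞}

def IsSparse (μ : Measure X) (ε : ℝ≥0∞) (J : Set ι) (Q : ι → Set X) : Prop :=
  ∀ j ∈ J, μ (⋃ i ∈ {i ∈ J | Q i ⊂ Q j}, Q i) ≤ ε * μ (Q j)

lemma IsSparse.mono {J K : Set ι} (h : IsSparse μ ε J Q) (hKJ : K ⊆ J) : IsSparse μ ε K Q :=
  fun j hj => (measure_mono <| biUnion_subset_biUnion_left fun i hi =>
    show i ∈ {i ∈ J | Q i ⊂ Q j} from ⟨hKJ hi.1, hi.2⟩).trans (h j (hKJ hj))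

variable {G : Finset ι} {T : ι}

lemma measurableSet_depthSet (hmeas : ∀ j ∈ G, MeasurableSet (Q j)) (m : ℕ) :
    MeasurableSet (depthSet Q G m) :=
  Finset.measurableSet_biUnion _ fun j hj => hmeas j (Finset.filter_subset _ _ hj)

/-- Inside a cube of depth `m + 1`, the layer of depth `m + 2` lies in its strict subcubes, so
sparseness costs a factor `ε` per layer. -/
lemma measure_depthSet_inter_le (hinj : InjOn Q G) (hnest : IsNested (G : Set ι) Q)
    (hne : ∀ j ∈ G, (Q j).Nonempty) (hmeas : ∀ j ∈ G, MeasurableSet (Q j))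
    (hsparse : IsSparse μ ε G Q) (hT : T ∈ G) (hT1 : depth Q G T = 1) (m : ℕ) :
    μ (depthSet Q G (m + 1) ∩ Q T) ≤ ε ^ m * μ (Q T) := by
  induction m with
  | zero => simpa using measure_mono inter_subset_right
  | succ m ih =>
    set R := G.filter fun t => depth Q G t = m + 1 ∧ Q t ⊆ Q T
    have hRG : R ⊆ G := Finset.filter_subset _ _
    have hcover : depthSet Q G (m + 1 + 1) ∩ Q T ⊆ ⋃ t ∈ R, depthSet Q G (m + 1 + 1) ∩ Q t := by
      rintro x ⟨hx, hxT⟩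
      obtain ⟨t, ht, htm, hxt⟩ :=
        exists_depth_eq_of_mem_depthSet hinj hnest hne (by omega) (Nat.le_succ _) hx
      exact mem_biUnion
        (Finset.mem_filter.2 ⟨ht, htm, subset_of_depth_eq_one hnest ht hT hT1 hxt hxT⟩) ⟨hx, hxt⟩
    have hR : ⋃ t ∈ R, Q t ⊆ depthSet Q G (m + 1) ∩ Q T := by
      simp only [iUnion_subset_iff]
      intro t ht x hxt
      obtain ⟨ht, htm, htT⟩ := Finset.mem_filter.1 ht
      exact ⟨mem_depthSet.2 ⟨t, ht, htm.ge, hxt⟩, htT hxt⟩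
    calc μ (depthSet Q G (m + 1 + 1) ∩ Q T)
        ≤ ∑ t ∈ R, μ (depthSet Q G (m + 1 + 1) ∩ Q t) :=
          (measure_mono hcover).trans (measure_biUnion_finset_le R _)
      _ ≤ ∑ t ∈ R, ε * μ (Q t) := by
          refine Finset.sum_le_sum fun t ht => ?_
          obtain ⟨htG, htm, -⟩ := Finset.mem_filter.1 ht
          rw [← htm]
          exact (measure_mono (depthSet_inter_subset hnest htG)).trans (hsparse t htG)
      _ = ε * μ (⋃ t ∈ R, Q t) := by
          rw [← Finset.mul_sum, measure_biUnion_finset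
            (pairwiseDisjoint_of_depth_eq hinj hnest hRG fun t ht => (Finset.mem_filter.1 ht).2.1)
            fun t ht => hmeas t (hRG ht)]
      _ ≤ ε * (ε ^ m * μ (Q T)) := by gcongr; exact (measure_mono hR).trans ih
      _ = ε ^ (m + 1) * μ (Q T) := by ring

end Sparse

section Holder

variable {X : Type*} [MeasurableSpace X] {μ : Measure X}

lemma setLIntegral_le_of_measure_le {w : X → ℝ≥0∞} (hw : AEMeasurable w μ) {r : ℝ} (hr : 1 < r)
    {A S : Set X} (hAS : A ⊆ S) (hS0 : μ S ≠ 0) (hSt : μ S ≠ ∞) {c : ℝ≥0∞}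
    (hc : μ A ≤ c * μ S) :
    ∫⁻ x in A, w x ∂μ ≤
      c ^ (1 / r.conjExponent) * (((μ S)⁻¹ * ∫⁻ y in S, w y ^ r ∂μ) ^ (1 / r) * μ S) := by
  have hconj := Real.HolderConjugate.conjExponent hr
  set q := r.conjExponent
  have hr' : 0 ≤ 1 / r := (one_div_pos.2 hconj.pos).le
  have hq' : 0 ≤ 1 / q := (one_div_pos.2 hconj.symm.pos).le
  have holder : ∫⁻ x in A, w x ∂μ ≤ (∫⁻ x in A, w x ^ r ∂μ) ^ (1 / r) * μ A ^ (1 / q) := by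
    simpa using ENNReal.lintegral_mul_le_Lp_mul_Lq (μ.restrict A) hconj hw.restrict
      (aemeasurable_const (b := (1 : ℝ≥0∞)))
  set a := (μ S)⁻¹ * ∫⁻ y in S, w y ^ r ∂μ
  have hS : ∫⁻ y in S, w y ^ r ∂μ = μ S * a := by
    rw [← mul_assoc, ENNReal.mul_inv_cancel hS0 hSt, one_mul]
  calc ∫⁻ x in A, w x ∂μ
      ≤ (∫⁻ y in S, w y ^ r ∂μ) ^ (1 / r) * (c * μ S) ^ (1 / q) :=
        holder.trans (mul_le_mul' (ENNReal.rpow_le_rpow (lintegral_mono_set hAS) hr')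
          (ENNReal.rpow_le_rpow hc hq'))
    _ = c ^ (1 / q) * (a ^ (1 / r) * (μ S ^ (1 / r) * μ S ^ (1 / q))) := by
        rw [hS, ENNReal.mul_rpow_of_nonneg (μ S) a hr', ENNReal.mul_rpow_of_nonneg c (μ S) hq']
        ring
    _ = c ^ (1 / q) * (a ^ (1 / r) * μ S) := by
        rw [← ENNReal.rpow_add _ _ hS0 hSt, one_div, one_div, hconj.inv_add_inv_eq_one,
          ENNReal.rpow_one]

lemma withDensity_depthSet_inter_le {ι : Type*} {w : X → ℝ≥0∞} (hw : AEMeasurable w μ) {r : ℝ}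
    (hr : 1 < r) {ε : ℝ≥0∞} {G : Finset ι} {Q : ι → Set X} (hinj : InjOn Q G)
    (hnest : IsNested (G : Set ι) Q) (hne : ∀ j ∈ G, (Q j).Nonempty)
    (hmeas : ∀ j ∈ G, MeasurableSet (Q j)) (hsparse : IsSparse μ ε G Q) {T : ι} (hT : T ∈ G)
    (hT1 : depth Q G T = 1) (hT0 : μ (Q T) ≠ 0) (hTt : μ (Q T) ≠ ∞) (m : ℕ) :
    μ.withDensity w (depthSet Q G (m + 1) ∩ Q T) ≤ (ε ^ (1 / r.conjExponent)) ^ m *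
      (((μ (Q T))⁻¹ * ∫⁻ y in Q T, w y ^ r ∂μ) ^ (1 / r) * μ (Q T)) := by
  rw [withDensity_apply _ ((measurableSet_depthSet hmeas _).inter (hmeas T hT)),
    ← ENNReal.rpow_mul_natCast, mul_comm (1 / _), ENNReal.rpow_natCast_mul]
  exact setLIntegral_le_of_measure_le hw hr inter_subset_right hT0 hTt
    (measure_depthSet_inter_le hinj hnest hne hmeas hsparse hT hT1 m)

lemma measure_le_inv_mul_setLIntegral {s : Set X} {f : X → ℝ≥0∞} {γ : ℝ≥0∞} (hγ0 : γ ≠ 0)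
    (hγt : γ ≠ ∞) (h : γ ≤ (μ s)⁻¹ * ∫⁻ y in s, f y ∂μ) : μ s ≤ γ⁻¹ * ∫⁻ y in s, f y ∂μ := by
  rcases eq_or_ne (μ s) 0 with h0 | h0
  · simp [h0]
  rcases eq_or_ne (μ s) ∞ with ht | ht
  · simp [ht, hγ0] at h
  rw [← ENNReal.div_eq_inv_mul, ENNReal.le_div_iff_mul_le (Or.inl h0) (Or.inl ht)] at h
  rwa [← ENNReal.div_eq_inv_mul, ENNReal.le_div_iff_mul_le (Or.inl hγ0) (Or.inl hγt), mul_comm]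

end Holder

lemma closedBall_subset_closedBall_three_mul_s12 {E : Type*} [PseudoMetricSpace E] {a b z : E}
    {s t : ℝ} (hst : s ≤ t) (ha : z ∈ closedBall a s) (hb : z ∈ closedBall b t) :
    closedBall a s ⊆ closedBall b (3 * t) := by
  refine closedBall_subset_closedBall' ?_
  have := dist_triangle a z b
  rw [mem_closedBall, dist_comm] at ha
  rw [mem_closedBall] at hb
  linarith

section Maximal

variable {n : ℕ} {g : (Fin n → ℝ) → ℝ≥0∞}

lemma volume_closedBall_ne_zero (c : Fin n → ℝ) {ρ : ℝ} (hρ : 0 < ρ) :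
    volume (closedBall c ρ) ≠ 0 :=
  (measure_closedBall_pos volume c hρ).ne'

lemma volume_closedBall_three_mul (c : Fin n → ℝ) {ρ : ℝ} (hρ : 0 ≤ ρ) :
    volume (closedBall c (3 * ρ)) = ENNReal.ofReal (3 ^ n) * volume (closedBall c ρ) := by
  rw [Measure.addHaar_closedBall volume c (by positivity), Measure.addHaar_closedBall volume c hρ,
    Module.finrank_fin_fun, mul_pow, ENNReal.ofReal_mul (by positivity), mul_assoc]

lemma setAverage_le_maximal {c x : Fin n → ℝ} {ρ : ℝ} (hρ : 0 < ρ) (hx : x ∈ closedBall c ρ) :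
    (volume (closedBall c ρ))⁻¹ * ∫⁻ y in closedBall c ρ, g y ≤ maximal g x :=
  le_iSup₂_of_le c ρ (le_iSup₂_of_le (α := ℝ≥0∞) hρ hx le_rfl)

lemma lintegral_closedBall_three_mul_le {c x : Fin n → ℝ} {ρ : ℝ} (hρ : 0 < ρ)
    (hx : x ∈ closedBall c (3 * ρ)) :
    ∫⁻ y in closedBall c (3 * ρ), g y ≤
      ENNReal.ofReal (3 ^ n) * volume (closedBall c ρ) * maximal g x := by
  rw [← volume_closedBall_three_mul c hρ.le, ← ENNReal.inv_mul_le_iff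
    (volume_closedBall_ne_zero c (by positivity)) measure_closedBall_lt_top.ne]
  exact setAverage_le_maximal (by positivity) hx

lemma setAverage_le_three_pow_mul_maximal {c x : Fin n → ℝ} {ρ : ℝ} (hρ : 0 < ρ)
    (hx : x ∈ closedBall c (3 * ρ)) :
    (volume (closedBall c ρ))⁻¹ * ∫⁻ y in closedBall c ρ, g y ≤
      ENNReal.ofReal (3 ^ n) * maximal g x := by
  rw [ENNReal.inv_mul_le_iff (volume_closedBall_ne_zero c hρ) measure_closedBall_lt_top.ne,
    ← mul_assoc, mul_comm _ (ENNReal.ofReal _)]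
  exact (lintegral_mono_set (closedBall_subset_closedBall (by linarith))).trans
    (lintegral_closedBall_three_mul_le hρ hx)

lemma volume_biUnion_le_of_subset_closedBall {ι : Type*} {G : Finset ι} {Q : ι → Set (Fin n → ℝ)}
    (hmeas : ∀ j ∈ G, MeasurableSet (Q j)) (hdisj : (G : Set ι).PairwiseDisjoint Q) {γ : ℝ≥0∞}
    (hγ0 : γ ≠ 0) (hγt : γ ≠ ∞) (hγ : ∀ j ∈ G, γ ≤ (volume (Q j))⁻¹ * ∫⁻ y in Q j, g y)
    {c x : Fin n → ℝ} {ρ : ℝ} (hρ : 0 < ρ) (hx : x ∈ closedBall c ρ)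
    (hsub : ∀ j ∈ G, Q j ⊆ closedBall c (3 * ρ)) :
    volume (⋃ j ∈ G, Q j) ≤
      γ⁻¹ * (ENNReal.ofReal (3 ^ n) * volume (closedBall c ρ) * maximal g x) :=
  calc volume (⋃ j ∈ G, Q j)
      ≤ ∑ j ∈ G, γ⁻¹ * ∫⁻ y in Q j, g y := (measure_biUnion_finset_le G _).trans
        (Finset.sum_le_sum fun j hj => measure_le_inv_mul_setLIntegral hγ0 hγt (hγ j hj))
    _ = γ⁻¹ * ∫⁻ y in ⋃ j ∈ G, Q j, g y := by
        rw [← Finset.mul_sum, lintegral_biUnion_finset hdisj hmeas]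
    _ ≤ γ⁻¹ * (ENNReal.ofReal (3 ^ n) * volume (closedBall c ρ) * maximal g x) := by
        gcongr
        exact (lintegral_mono_set (iUnion₂_subset hsub)).trans (lintegral_closedBall_three_mul_le hρ
          (closedBall_subset_closedBall (by linarith) hx))

/-- A ball meeting a larger cube of the family lies in the triple of that cube; the smaller cubes
meeting a ball lie in the triple of the ball. -/
lemma maximalInd_biUnion_le {ι : Type*} {G : Finset ι} {Q : ι → Set (Fin n → ℝ)}
    {c : ι → Fin n → ℝ} {ρ : ι → ℝ} (hball : ∀ j ∈ G, 0 < ρ j ∧ Q j = closedBall (c j) (ρ j))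
    (hdisj : (G : Set ι).PairwiseDisjoint Q) {γ : ℝ≥0∞} (hγ0 : γ ≠ 0) (hγt : γ ≠ ∞)
    (hγ : ∀ j ∈ G, γ ≤ (volume (Q j))⁻¹ * ∫⁻ y in Q j, g y) (x : Fin n → ℝ) :
    maximalInd (⋃ j ∈ G, Q j) x ≤ ENNReal.ofReal (3 ^ n) * γ⁻¹ * maximal g x := by
  have hmeas : ∀ j ∈ G, MeasurableSet (Q j) := fun j hj =>
    (hball j hj).2 ▸ measurableSet_closedBall
  set U := ⋃ j ∈ G, Q j
  have hU : MeasurableSet U := Finset.measurableSet_biUnion _ hmeas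
  refine iSup₂_le fun c₀ r₀ => iSup₂_le fun hr₀ hx => ?_
  set B := closedBall c₀ r₀
  have hB0 : volume B ≠ 0 := volume_closedBall_ne_zero c₀ hr₀
  have hBt : volume B ≠ ∞ := measure_closedBall_lt_top.ne
  rw [lintegral_indicator_one hU, Measure.restrict_apply hU]
  by_cases hbig : ∃ j ∈ G, (Q j ∩ B).Nonempty ∧ r₀ < ρ j
  · obtain ⟨j, hj, ⟨z, hzj, hzB⟩, hr₀j⟩ := hbig
    obtain ⟨hρ, hQ⟩ := hball j hj
    have hγM : γ ≤ ENNReal.ofReal (3 ^ n) * maximal g x := (hγ j hj).trans <| hQ ▸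
      setAverage_le_three_pow_mul_maximal hρ
        (closedBall_subset_closedBall_three_mul_s12 hr₀j.le hzB (hQ ▸ hzj) hx)
    calc (volume B)⁻¹ * volume (U ∩ B) ≤ (volume B)⁻¹ * volume B := by
          gcongr; exact inter_subset_right
      _ = γ⁻¹ * γ := by rw [ENNReal.inv_mul_cancel hB0 hBt, ENNReal.inv_mul_cancel hγ0 hγt]
      _ ≤ γ⁻¹ * (ENNReal.ofReal (3 ^ n) * maximal g x) := by gcongr
      _ = ENNReal.ofReal (3 ^ n) * γ⁻¹ * maximal g x := by ring
  · push Not at hbig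
    set S := G.filter fun j => (Q j ∩ B).Nonempty
    have hSG : S ⊆ G := Finset.filter_subset _ _
    have hUB : U ∩ B ⊆ ⋃ j ∈ S, Q j := by
      rintro y ⟨hyU, hyB⟩
      obtain ⟨j, hj, hyj⟩ := mem_iUnion₂.1 hyU
      exact mem_biUnion (Finset.mem_filter.2 ⟨hj, y, hyj, hyB⟩) hyj
    have hS3 : ∀ j ∈ S, Q j ⊆ closedBall c₀ (3 * r₀) := by
      intro j hj
      obtain ⟨hj, z, hzj, hzB⟩ := Finset.mem_filter.1 hj
      obtain ⟨-, hQ⟩ := hball j hj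
      rw [hQ] at hzj ⊢
      exact closedBall_subset_closedBall_three_mul_s12 (hbig j hj ⟨z, hQ ▸ hzj, hzB⟩) hzj hzB
    calc (volume B)⁻¹ * volume (U ∩ B)
        ≤ (volume B)⁻¹ * (γ⁻¹ * (ENNReal.ofReal (3 ^ n) * volume B * maximal g x)) := by
          gcongr
          exact (measure_mono hUB).trans (volume_biUnion_le_of_subset_closedBall
            (fun j hj => hmeas j (hSG hj)) (hdisj.subset (by simpa using hSG)) hγ0 hγt
            (fun j hj => hγ j (hSG hj)) hr₀ hx hS3)
      _ = ENNReal.ofReal (3 ^ n) * γ⁻¹ * maximal g x * ((volume B)⁻¹ * volume B) := by ring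
      _ = ENNReal.ofReal (3 ^ n) * γ⁻¹ * maximal g x := by
          rw [ENNReal.inv_mul_cancel hB0 hBt, mul_one]

end Maximal

section KeyEstimate

variable {n : ℕ} {w : (Fin n → ℝ) → ℝ≥0∞} {p r : ℝ} {C₀ : ℝ≥0∞}

lemma SCp.sum_le (hSC : SCp w p r C₀) {R : Finset ℕ} {Q : ℕ → Set (Fin n → ℝ)}
    {c : ℕ → Fin n → ℝ} {ρ : ℕ → ℝ} (hball : ∀ j ∈ R, 0 < ρ j ∧ Q j = closedBall (c j) (ρ j))
    (hdisj : (R : Set ℕ).PairwiseDisjoint Q) :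
    ∑ j ∈ R, ((volume (Q j))⁻¹ * ∫⁻ y in Q j, w y ^ r) ^ (1 / r) * volume (Q j) ≤
      C₀ * ∫⁻ x, maximalInd (⋃ j ∈ R, Q j) x ^ p * w x := by
  have hU : ⋃ j ∈ (R : Set ℕ), closedBall (c j) (ρ j) = ⋃ j ∈ R, Q j :=
    iUnion₂_congr fun j hj => (hball j hj).2.symm
  have hdisj' : (R : Set ℕ).PairwiseDisjoint fun j => closedBall (c j) (ρ j) :=
    fun i hi j hj hij => by
      simpa only [Function.onFun, (hball i hi).2, (hball j hj).2] using hdisj hi hj hij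
  have h := hSC R c ρ (fun j hj => (hball j hj).1) hdisj'
  rw [hU, Finset.tsum_subtype' R fun j =>
    ((volume (closedBall (c j) (ρ j)))⁻¹ * ∫⁻ y in closedBall (c j) (ρ j), w y ^ r) ^ (1 / r) *
      volume (closedBall (c j) (ρ j))] at h
  refine le_of_eq_of_le (Finset.sum_congr rfl fun j hj => ?_) h
  rw [(hball j hj).2]

lemma lintegral_maximalInd_rpow_mul_le (hp : 0 ≤ p) {ι : Type*} {G : Finset ι}
    {Q : ι → Set (Fin n → ℝ)} {c : ι → Fin n → ℝ} {ρ : ι → ℝ}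
    (hball : ∀ j ∈ G, 0 < ρ j ∧ Q j = closedBall (c j) (ρ j))
    (hdisj : (G : Set ι).PairwiseDisjoint Q) {g : (Fin n → ℝ) → ℝ≥0∞} {γ : ℝ≥0∞} (hγ0 : γ ≠ 0)
    (hγt : γ ≠ ∞) (hγ : ∀ j ∈ G, γ ≤ (volume (Q j))⁻¹ * ∫⁻ y in Q j, g y) :
    ∫⁻ x, maximalInd (⋃ j ∈ G, Q j) x ^ p * w x ≤
      (ENNReal.ofReal (3 ^ n) * γ⁻¹) ^ p * ∫⁻ x, maximal g x ^ p * w x := by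
  rw [← lintegral_const_mul' _ _ (ENNReal.rpow_ne_top_of_nonneg hp
    (ENNReal.mul_ne_top ENNReal.ofReal_ne_top (ENNReal.inv_ne_top.2 hγ0)))]
  refine lintegral_mono fun x => ?_
  rw [← mul_assoc, ← ENNReal.mul_rpow_of_nonneg _ _ hp]
  gcongr
  exact maximalInd_biUnion_le hball hdisj hγ0 hγt hγ x

lemma withDensity_depthSet_le (hw : AEMeasurable w) (hp : 0 ≤ p) (hr : 1 < r)
    (hSC : SCp w p r C₀) {ε : ℝ≥0∞} {G : Finset ℕ} {Q : ℕ → Set (Fin n → ℝ)}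
    {c : ℕ → Fin n → ℝ} {ρ : ℕ → ℝ} (hball : ∀ j ∈ G, 0 < ρ j ∧ Q j = closedBall (c j) (ρ j))
    (hinj : InjOn Q G) (hnest : IsNested (G : Set ℕ) Q) (hsparse : IsSparse volume ε G Q)
    {g : (Fin n → ℝ) → ℝ≥0∞} {γ : ℝ≥0∞} (hγ0 : γ ≠ 0) (hγt : γ ≠ ∞)
    (hγ : ∀ j ∈ G, γ ≤ (volume (Q j))⁻¹ * ∫⁻ y in Q j, g y) (m : ℕ) :
    volume.withDensity w (depthSet Q G (m + 1)) ≤ (ε ^ (1 / r.conjExponent)) ^ m *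
      (C₀ * (ENNReal.ofReal (3 ^ n) * γ⁻¹) ^ p * ∫⁻ x, maximal g x ^ p * w x) := by
  have hne : ∀ j ∈ G, (Q j).Nonempty := fun j hj =>
    (hball j hj).2 ▸ nonempty_closedBall.2 (hball j hj).1.le
  have hmeas : ∀ j ∈ G, MeasurableSet (Q j) := fun j hj =>
    (hball j hj).2 ▸ measurableSet_closedBall
  set R := G.filter fun T => depth Q G T = 1
  have hRG : R ⊆ G := Finset.filter_subset _ _
  have hdisj : (R : Set ℕ).PairwiseDisjoint Q :=
    pairwiseDisjoint_of_depth_eq hinj hnest hRG fun T hT => (Finset.mem_filter.1 hT).2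
  have hcover : depthSet Q G (m + 1) ⊆ ⋃ T ∈ R, depthSet Q G (m + 1) ∩ Q T := by
    intro x hx
    obtain ⟨T, hT, hT1, hxT⟩ :=
      exists_depth_eq_of_mem_depthSet hinj hnest hne le_rfl (by omega) hx
    exact mem_biUnion (Finset.mem_filter.2 ⟨hT, hT1⟩) ⟨hx, hxT⟩
  calc volume.withDensity w (depthSet Q G (m + 1))
      ≤ ∑ T ∈ R, volume.withDensity w (depthSet Q G (m + 1) ∩ Q T) :=
        (measure_mono hcover).trans (measure_biUnion_finset_le R _)
    _ ≤ ∑ T ∈ R, (ε ^ (1 / r.conjExponent)) ^ m *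
          (((volume (Q T))⁻¹ * ∫⁻ y in Q T, w y ^ r) ^ (1 / r) * volume (Q T)) := by
        refine Finset.sum_le_sum fun T hT => ?_
        obtain ⟨hTG, hT1⟩ := Finset.mem_filter.1 hT
        obtain ⟨hρ, hQ⟩ := hball T hTG
        exact withDensity_depthSet_inter_le hw hr hinj hnest hne hmeas hsparse hTG hT1
          (hQ ▸ volume_closedBall_ne_zero _ hρ) (hQ ▸ measure_closedBall_lt_top.ne) m
    _ ≤ (ε ^ (1 / r.conjExponent)) ^ m * (C₀ * ∫⁻ x, maximalInd (⋃ T ∈ R, Q T) x ^ p * w x) := by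
        rw [← Finset.mul_sum]
        gcongr
        exact hSC.sum_le (fun T hT => hball T (hRG hT)) hdisj
    _ ≤ (ε ^ (1 / r.conjExponent)) ^ m *
          (C₀ * ((ENNReal.ofReal (3 ^ n) * γ⁻¹) ^ p * ∫⁻ x, maximal g x ^ p * w x)) := by
        gcongr
        exact lintegral_maximalInd_rpow_mul_le hp (fun T hT => hball T (hRG hT)) hdisj hγ0 hγt
          fun T hT => hγ T (hRG hT)
    _ = _ := by ring

end KeyEstimate

section Levels

open Filter Topology

lemma exists_pow_succ_mul_lt_le {a t c : ℝ≥0∞} (hc : c < 1) (ha : a ≠ 0) (ht : t ≠ ∞)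
    (hat : a ≤ t) : ∃ k : ℕ, c ^ (k + 1) * t < a ∧ a ≤ c ^ k * t := by
  have hlim : Tendsto (fun k : ℕ => c ^ (k + 1) * t) atTop (𝓝 0) := by
    simpa using ENNReal.Tendsto.mul_const
      ((ENNReal.tendsto_pow_atTop_nhds_zero_of_lt_one hc).comp (tendsto_add_atTop_nat 1))
      (Or.inr ht)
  have hex : ∃ k : ℕ, c ^ (k + 1) * t < a :=
    (hlim.eventually (gt_mem_nhds (pos_iff_ne_zero.2 ha))).exists
  refine ⟨Nat.find hex, Nat.find_spec hex, ?_⟩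
  rcases h : Nat.find hex with _ | k
  · simpa using hat
  · exact not_lt.1 (Nat.find_min hex (h ▸ Nat.lt_succ_self k))

lemma eventually_pow_mul_lt_one {δ c : ℝ≥0∞} (hδ : δ < 1) (hc : c ≠ ∞) :
    ∀ᶠ b : ℕ in atTop, δ ^ b * c < 1 := by
  have hlim : Tendsto (fun b : ℕ => δ ^ b * c) atTop (𝓝 0) := by
    simpa using ENNReal.Tendsto.mul_const (ENNReal.tendsto_pow_atTop_nhds_zero_of_lt_one hδ)
      (Or.inr hc)
  exact hlim.eventually (gt_mem_nhds zero_lt_one)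

lemma tsum_succ_mul_inv_four_pow_le : ∑' k : ℕ, ((k + 1 : ℕ) : ℝ≥0∞) * 4⁻¹ ^ k ≤ 2 := by
  calc ∑' k : ℕ, ((k + 1 : ℕ) : ℝ≥0∞) * 4⁻¹ ^ k ≤ ∑' k : ℕ, (2 : ℝ≥0∞) ^ k * 4⁻¹ ^ k := by
        gcongr with k
        exact_mod_cast Nat.lt_two_pow_self
    _ = ∑' k : ℕ, (2⁻¹ : ℝ≥0∞) ^ k := by
        refine tsum_congr fun k => ?_
        rw [← mul_pow, show (4 : ℝ≥0∞) = 2 * 2 by norm_num,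
          ENNReal.mul_inv (by simp) (by simp), ← mul_assoc,
          ENNReal.mul_inv_cancel (by simp) (by simp), one_mul]
    _ = 2 := by rw [ENNReal.tsum_geometric, ENNReal.one_sub_inv_two, inv_inv]

variable {ι α : Type*}

/-- The family `F_k` of the paper, with the averages measured in units of `t`. -/
noncomputable def levelFamily (F : Finset ι) (a : ι → ℝ≥0∞) (t : ℝ≥0∞) (k : ℕ) : Finset ι :=
  F.filter fun j => 4⁻¹ ^ (k + 1) * t < a j ∧ a j ≤ 4⁻¹ ^ k * t

/-- Each average is at most `4^{-k} t` for its level `k`, and `∑ₖ b (k + 1) 4^{-k} ≤ 2 b`. -/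
lemma sum_mul_indicator_le {F : Finset ι} {Q : ι → Set α} (hnest : IsNested (F : Set ι) Q)
    {a : ι → ℝ≥0∞} {t : ℝ≥0∞} (ht : t ≠ ∞) {b : ℕ} {x : α}
    (hbig : x ∉ depthSet Q (F.filter fun j => t < a j) 1)
    (hlevel : ∀ k, x ∉ depthSet Q (levelFamily F a t k) (b * (k + 1) + 1)) :
    ∑ j ∈ F, a j * (Q j).indicator 1 x ≤ 2 * b * t := by
  set C := F.filter fun j => x ∈ Q j
  have hsum : ∑ j ∈ F, a j * (Q j).indicator 1 x = ∑ j ∈ C, a j := by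
    rw [Finset.sum_filter]
    exact Finset.sum_congr rfl fun j _ => by by_cases hx : x ∈ Q j <;> simp [hx]
  have hsplit : ∀ j ∈ C, a j ≤ ∑' k, if j ∈ levelFamily F a t k then 4⁻¹ ^ k * t else 0 := by
    intro j hj
    obtain ⟨hjF, hxj⟩ := Finset.mem_filter.1 hj
    have hat : a j ≤ t := not_lt.1 fun h => hbig <| mem_depthSet.2
      ⟨j, Finset.mem_filter.2 ⟨hjF, h⟩, one_le_depth (Finset.mem_filter.2 ⟨hjF, h⟩), hxj⟩
    rcases eq_or_ne (a j) 0 with h0 | h0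
    · simp [h0]
    obtain ⟨k, hk⟩ := exists_pow_succ_mul_lt_le (c := 4⁻¹) (by norm_num) h0 ht hat
    refine hk.2.trans (le_trans (le_of_eq ?_) (ENNReal.le_tsum k))
    rw [if_pos (show j ∈ levelFamily F a t k from Finset.mem_filter.2 ⟨hjF, hk⟩)]
  have hcount : ∀ k, (C ∩ levelFamily F a t k).card ≤ b * (k + 1) := by
    intro k
    refine (Finset.card_le_card fun j hj => ?_).trans (card_filter_mem_le
      (hnest.mono (Finset.coe_subset.2 (Finset.filter_subset _ _))) (hlevel k))
    obtain ⟨hjC, hjk⟩ := Finset.mem_inter.1 hj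
    exact Finset.mem_filter.2 ⟨hjk, (Finset.mem_filter.1 hjC).2⟩
  calc ∑ j ∈ F, a j * (Q j).indicator 1 x
      = ∑ j ∈ C, a j := hsum
    _ ≤ ∑ j ∈ C, ∑' k, if j ∈ levelFamily F a t k then 4⁻¹ ^ k * t else 0 :=
        Finset.sum_le_sum hsplit
    _ = ∑' k, ((C ∩ levelFamily F a t k).card : ℝ≥0∞) * (4⁻¹ ^ k * t) := by
        rw [← Summable.tsum_finsetSum fun _ _ => ENNReal.summable]
        simp only [Finset.sum_ite_mem, Finset.sum_const, nsmul_eq_mul]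
    _ ≤ ∑' k : ℕ, ((b * (k + 1) : ℕ) : ℝ≥0∞) * (4⁻¹ ^ k * t) := by
        gcongr with k
        exact_mod_cast hcount k
    _ = b * t * ∑' k : ℕ, ((k + 1 : ℕ) : ℝ≥0∞) * 4⁻¹ ^ k := by
        rw [← ENNReal.tsum_mul_left]
        refine tsum_congr fun k => ?_
        push_cast
        ring
    _ ≤ b * t * 2 := by gcongr; exact tsum_succ_mul_inv_four_pow_le
    _ = 2 * b * t := by ring

end Levels

section LevelSet

variable {n : ℕ} {w : (Fin n → ℝ) → ℝ≥0∞} {p r : ℝ} {C₀ ε : ℝ≥0∞} {F : Finset ℕ}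
  {Q : ℕ → Set (Fin n → ℝ)} {c : ℕ → Fin n → ℝ} {ρ : ℕ → ℝ} {g : (Fin n → ℝ) → ℝ≥0∞}

lemma withDensity_depthSet_levelFamily_le (hw : AEMeasurable w) (hp : 0 ≤ p) (hr : 1 < r)
    (hSC : SCp w p r C₀) (hball : ∀ j ∈ F, 0 < ρ j ∧ Q j = closedBall (c j) (ρ j))
    (hinj : InjOn Q F) (hnest : IsNested (F : Set ℕ) Q) (hsparse : IsSparse volume ε F Q)
    (b k : ℕ) {t : ℝ≥0∞} (ht0 : t ≠ 0) (htt : t ≠ ∞) :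
    volume.withDensity w (depthSet Q
        (levelFamily F (fun j => (volume (Q j))⁻¹ * ∫⁻ y in Q j, g y) t k) (b * (k + 1) + 1)) ≤
      ((ε ^ (1 / r.conjExponent)) ^ b * 4 ^ p) ^ (k + 1) *
        (C₀ * (ENNReal.ofReal (3 ^ n) * t⁻¹) ^ p * ∫⁻ x, maximal g x ^ p * w x) := by
  have hF : levelFamily F (fun j => (volume (Q j))⁻¹ * ∫⁻ y in Q j, g y) t k ⊆ F :=
    Finset.filter_subset _ _
  have h4 : (4⁻¹ : ℝ≥0∞) ^ (k + 1) ≠ 0 := pow_ne_zero _ (by norm_num)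
  refine (withDensity_depthSet_le hw hp hr hSC (fun j hj => hball j (hF hj)) (hinj.mono hF)
    (hnest.mono hF) (hsparse.mono hF) (mul_ne_zero h4 ht0)
    (ENNReal.mul_ne_top (by finiteness) htt) (fun j hj => (Finset.mem_filter.1 hj).2.1.le)
    (b * (k + 1))).trans_eq ?_
  have h4p : ((4 : ℝ≥0∞) ^ (k + 1)) ^ p = (4 ^ p) ^ (k + 1) := by
    rw [← ENNReal.rpow_natCast_mul, mul_comm, ENNReal.rpow_mul_natCast]
  have hγ : (ENNReal.ofReal (3 ^ n) * (4⁻¹ ^ (k + 1) * t)⁻¹) ^ p =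
      (4 ^ p) ^ (k + 1) * (ENNReal.ofReal (3 ^ n) * t⁻¹) ^ p := by
    rw [ENNReal.mul_inv (Or.inr htt) (Or.inr ht0), ENNReal.inv_pow, inv_inv, mul_left_comm,
      ENNReal.mul_rpow_of_nonneg (4 ^ (k + 1)) _ hp, h4p]
  rw [hγ, pow_mul, mul_pow]
  ring

lemma withDensity_setOf_two_mul_lt_le (hw : AEMeasurable w) (hp : 0 ≤ p) (hr : 1 < r)
    (hSC : SCp w p r C₀) (hball : ∀ j ∈ F, 0 < ρ j ∧ Q j = closedBall (c j) (ρ j))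
    (hinj : InjOn Q F) (hnest : IsNested (F : Set ℕ) Q) (hsparse : IsSparse volume ε F Q)
    (b : ℕ) {t : ℝ≥0∞} (ht0 : t ≠ 0) (htt : t ≠ ∞) :
    volume.withDensity w
        {x | 2 * b * t < ∑ j ∈ F, ((volume (Q j))⁻¹ * ∫⁻ y in Q j, g y) * (Q j).indicator 1 x} ≤
      (1 - (ε ^ (1 / r.conjExponent)) ^ b * 4 ^ p)⁻¹ *
        (C₀ * (ENNReal.ofReal (3 ^ n) * t⁻¹) ^ p * ∫⁻ x, maximal g x ^ p * w x) := by
  set av := fun j => (volume (Q j))⁻¹ * ∫⁻ y in Q j, g y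
  set θ := (ε ^ (1 / r.conjExponent)) ^ b * 4 ^ p
  set K₀ := C₀ * (ENNReal.ofReal (3 ^ n) * t⁻¹) ^ p * ∫⁻ x, maximal g x ^ p * w x
  have hcover : {x | 2 * b * t < ∑ j ∈ F, av j * (Q j).indicator 1 x} ⊆
      depthSet Q (F.filter fun j => t < av j) (0 + 1) ∪
        ⋃ k, depthSet Q (levelFamily F av t k) (b * (k + 1) + 1) := by
    intro x hx
    by_contra h
    simp only [mem_union, mem_iUnion, not_or, not_exists] at h
    exact not_le.2 hx (sum_mul_indicator_le hnest htt h.1 h.2)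
  have hbig : volume.withDensity w (depthSet Q (F.filter fun j => t < av j) (0 + 1)) ≤ K₀ := by
    have hF : F.filter (fun j => t < av j) ⊆ F := Finset.filter_subset _ _
    refine (withDensity_depthSet_le hw hp hr hSC (fun j hj => hball j (hF hj)) (hinj.mono hF)
      (hnest.mono hF) (hsparse.mono hF) ht0 htt (fun j hj => (Finset.mem_filter.1 hj).2.le)
      0).trans_eq ?_
    rw [pow_zero, one_mul]
  calc volume.withDensity w {x | 2 * b * t < ∑ j ∈ F, av j * (Q j).indicator 1 x}
      ≤ volume.withDensity w (depthSet Q (F.filter fun j => t < av j) (0 + 1)) +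
          ∑' k, volume.withDensity w (depthSet Q (levelFamily F av t k) (b * (k + 1) + 1)) :=
        (measure_mono hcover).trans
          ((measure_union_le _ _).trans (add_le_add_right (measure_iUnion_le _) _))
    _ ≤ K₀ + ∑' k, θ ^ (k + 1) * K₀ := add_le_add hbig (ENNReal.tsum_le_tsum fun k =>
        withDensity_depthSet_levelFamily_le hw hp hr hSC hball hinj hnest hsparse b k ht0 htt)
    _ = ∑' k, θ ^ k * K₀ := by
        rw [tsum_eq_zero_add' (f := fun k => θ ^ k * K₀) ENNReal.summable, pow_zero, one_mul]
    _ = (1 - θ)⁻¹ * K₀ := by rw [ENNReal.tsum_mul_right, ENNReal.tsum_geometric]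

lemma withDensity_setOf_lt_le (hw : AEMeasurable w) (hp : 0 ≤ p) (hr : 1 < r)
    (hSC : SCp w p r C₀) (hball : ∀ j ∈ F, 0 < ρ j ∧ Q j = closedBall (c j) (ρ j))
    (hinj : InjOn Q F) (hnest : IsNested (F : Set ℕ) Q) (hsparse : IsSparse volume ε F Q)
    {b : ℕ} (hb : b ≠ 0) {α : ℝ≥0∞} (hα0 : α ≠ 0) (hαt : α ≠ ∞) :
    volume.withDensity w
        {x | α < ∑ j ∈ F, ((volume (Q j))⁻¹ * ∫⁻ y in Q j, g y) * (Q j).indicator 1 x} ≤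
      (1 - (ε ^ (1 / r.conjExponent)) ^ b * 4 ^ p)⁻¹ * C₀ *
        (ENNReal.ofReal (3 ^ n) * (2 * b)) ^ p * α⁻¹ ^ p * ∫⁻ x, maximal g x ^ p * w x := by
  have h2b0 : (2 * b : ℝ≥0∞) ≠ 0 := by simp [hb]
  have h2bt : (2 * b : ℝ≥0∞) ≠ ∞ := by finiteness
  have h := withDensity_setOf_two_mul_lt_le hw hp hr hSC hball hinj hnest hsparse b (g := g)
    (t := α / (2 * b)) (by simp [hα0, h2bt]) (ENNReal.div_ne_top hαt h2b0)
  rw [ENNReal.mul_div_cancel h2b0 h2bt] at h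
  refine h.trans_eq ?_
  rw [ENNReal.inv_div (Or.inl h2bt) (Or.inl h2b0), ENNReal.div_eq_inv_mul,
    show ENNReal.ofReal (3 ^ n) * (α⁻¹ * (2 * b)) = ENNReal.ofReal (3 ^ n) * (2 * b) * α⁻¹ by ring,
    ENNReal.mul_rpow_of_nonneg _ _ hp]
  ring

end LevelSet

lemma withDensity_setOf_lt_sparseOp_le {n : ℕ} {ν : Measure (Fin n → ℝ)} {J : Set ℕ}
    {Q : ℕ → Set (Fin n → ℝ)} {f : (Fin n → ℝ) → ℝ} {α K : ℝ≥0∞}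
    (h : ∀ F : Finset ℕ, ↑F ⊆ J → ν {x | α < ∑ j ∈ F,
      ((volume (Q j))⁻¹ * ∫⁻ y in Q j, (‖f y‖₊ : ℝ≥0∞)) * (Q j).indicator 1 x} ≤ K) :
    ν {x | α < sparseOp J Q f x} ≤ K := by
  set term := fun (j : ℕ) (x : Fin n → ℝ) =>
    ((volume (Q j))⁻¹ * ∫⁻ y in Q j, (‖f y‖₊ : ℝ≥0∞)) * (Q j).indicator 1 x
  have hU : {x | α < sparseOp J Q f x} = ⋃ s : Finset J, {x | α < ∑ j ∈ s, term j x} := by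
    ext x
    simp only [mem_ofPred_eq, mem_iUnion, sparseOp, ENNReal.tsum_eq_iSup_sum, lt_iSup_iff, term]
  have hmono : Monotone fun s : Finset J => {x | α < ∑ j ∈ s, term j x} :=
    fun _ _ hss' _ hx => show α < _ from lt_of_lt_of_le hx (Finset.sum_le_sum_of_subset hss')
  rw [hU, Directed.measure_iUnion hmono.directed_le]
  refine iSup_le fun s => ?_
  have hs := h (s.map (Function.Embedding.subtype _)) (by simp)
  simpa only [Finset.sum_map, Function.Embedding.coe_subtype] using hs

lemma mul_measure_setOf_lt_rpow_le {X : Type*} [MeasurableSpace X] {ν : Measure X}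
    {T : X → ℝ≥0∞} {p : ℝ} (hp : 0 < p) {K I : ℝ≥0∞}
    (h : ∀ α : ℝ≥0∞, α ≠ 0 → α ≠ ∞ → ν {x | α < T x} ≤ K * α⁻¹ ^ p * I) (α : ℝ≥0∞) :
    α * ν {x | α < T x} ^ (1 / p) ≤ K ^ (1 / p) * I ^ (1 / p) := by
  rcases eq_or_ne α 0 with rfl | hα0
  · simp
  rcases eq_or_ne α ∞ with rfl | hαt
  · simp [ENNReal.zero_rpow_of_pos (inv_pos.2 hp)]
  calc α * ν {x | α < T x} ^ (1 / p)
      ≤ α * (K * α⁻¹ ^ p * I) ^ (1 / p) := by gcongr; exact h α hα0 hαt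
    _ = K ^ (1 / p) * I ^ (1 / p) * (α * α⁻¹) := by
        rw [ENNReal.mul_rpow_of_nonneg _ _ (by positivity),
          ENNReal.mul_rpow_of_nonneg _ _ (by positivity), ← ENNReal.rpow_mul,
          mul_one_div_cancel hp.ne', ENNReal.rpow_one]
        ring
    _ = K ^ (1 / p) * I ^ (1 / p) := by rw [ENNReal.mul_inv_cancel hα0 hαt, mul_one]

theorem stmt12_general {n : ℕ} (w : (Fin n → ℝ) → ℝ≥0∞) (hw : Measurable w)
    (p r η : ℝ) (hp : 0 < p) (hr : 1 < r) (hη0 : 0 < η)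
    (C₀ : ℝ≥0∞) (hC₀ : C₀ < ∞) (hSC : SCp w p r C₀)
    (J : Set ℕ) (Q : ℕ → Set (Fin n → ℝ))
    (hcube : ∀ j ∈ J, ∃ (c : Fin n → ℝ) (ρ : ℝ), 0 < ρ ∧ Q j = closedBall c ρ)
    (hinj : J.InjOn Q)
    (hnest : ∀ i ∈ J, ∀ j ∈ J, Q i ⊆ Q j ∨ Q j ⊆ Q i ∨ Disjoint (Q i) (Q j))
    (hsparse : ∀ j ∈ J,
      volume (⋃ i ∈ {i ∈ J | Q i ⊂ Q j}, Q i) ≤ ENNReal.ofReal (1 - η) * volume (Q j)) :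
    ∃ C : ℝ≥0∞, C < ∞ ∧
      ∀ f : (Fin n → ℝ) → ℝ, LocallyIntegrable f volume →
        ∀ α : ℝ≥0∞, α * (∫⁻ x in {x | α < sparseOp J Q f x}, w x) ^ (1/p) ≤
          C * (∫⁻ x, (maximal (fun y => (‖f y‖₊ : ℝ≥0∞)) x) ^ p * w x) ^ (1/p) := by
  choose! c ρ hball using hcube
  set δ := ENNReal.ofReal (1 - η) ^ (1 / r.conjExponent)
  have hδ : δ < 1 := ENNReal.rpow_lt_one (ENNReal.ofReal_lt_one.2 (by linarith))
    (one_div_pos.2 (Real.HolderConjugate.conjExponent hr).symm.pos)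
  obtain ⟨b, hθ, hb⟩ :=
    ((eventually_pow_mul_lt_one hδ (by finiteness : (4 : ℝ≥0∞) ^ p ≠ ∞)).and
      (Filter.eventually_ne_atTop 0)).exists
  have hθ' : (1 - δ ^ b * 4 ^ p)⁻¹ ≠ ∞ := ENNReal.inv_ne_top.2 (tsub_pos_of_lt hθ).ne'
  refine ⟨((1 - δ ^ b * 4 ^ p)⁻¹ * C₀ * (ENNReal.ofReal (3 ^ n) * (2 * b)) ^ p) ^ (1 / p),
    by finiteness, fun f _ α => ?_⟩
  rw [← withDensity_apply' w]
  refine mul_measure_setOf_lt_rpow_le hp (fun α hα0 hαt => ?_) α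
  refine withDensity_setOf_lt_sparseOp_le fun F hF => ?_
  exact withDensity_setOf_lt_le hw.aemeasurable hp.le hr hSC (fun j hj => hball j (hF hj))
    (hinj.mono hF) (IsNested.mono hnest hF) (IsSparse.mono hsparse hF) hb hα0 hαt

/-- Weak type sparse bound (Theorem 1.3): if `w ∈ SC_p`, then for every `η`-sparse
family `𝒮` of (nested-or-disjoint) dyadic-like cubes,
`‖A_𝒮 f‖_{L^{p,∞}(w)} ≤ C ‖Mf‖_{L^p(w)}`, with `C` independent of `f`. -/
theorem stmt12 {n : ℕ} (w : (Fin n → ℝ) → ℝ≥0∞) (hw : Measurable w)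
    (p r η : ℝ) (hp : 0 < p) (hr : 1 < r) (hη0 : 0 < η) (hη1 : η < 1)
    (C₀ : ℝ≥0∞) (hC₀ : C₀ < ∞) (hSC : SCp w p r C₀)
    (J : Set ℕ) (Q : ℕ → Set (Fin n → ℝ))
    (hcube : ∀ j ∈ J, ∃ (c : Fin n → ℝ) (ρ : ℝ), 0 < ρ ∧ Q j = closedBall c ρ)
    (hinj : J.InjOn Q)
    (hnest : ∀ i ∈ J, ∀ j ∈ J, Q i ⊆ Q j ∨ Q j ⊆ Q i ∨ Disjoint (Q i) (Q j))
    (hsparse : ∀ j ∈ J,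
      volume (⋃ i ∈ {i ∈ J | Q i ⊂ Q j}, Q i) ≤ ENNReal.ofReal (1 - η) * volume (Q j)) :
    ∃ C : ℝ≥0∞, C < ∞ ∧
      ∀ f : (Fin n → ℝ) → ℝ, LocallyIntegrable f volume →
        ∀ α : ℝ≥0∞, α * (∫⁻ x in {x | α < sparseOp J Q f x}, w x) ^ (1/p) ≤
          C * (∫⁻ x, (maximal (fun y => (‖f y‖₊ : ℝ≥0∞)) x) ^ p * w x) ^ (1/p) :=
  stmt12_general w hw p r η hp hr hη0 C₀ hC₀ hSC J Q hcube hinj hnest hsparse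
end

section
/- (Stein's L log L estimate) There is a dimensional constant c_n such that for every cube Q and every f ∈ L¹(Q), ‖f‖_{L log L, Q} |Q| ≤ c_n ∫_Q M(f χ_Q)(x) dx, where M is the Hardy–Littlewood maximal operator. -/
/-!
Write `g = |f| χ_Q`. The pointwise bound `s log (e + s) ≤ 2 s + #{k : 2^k < s} · s` splits
`∫_Q Φ(|f|/β)` into `β⁻¹ ∫_Q g` and the pieces `β⁻¹ ∫_{Q ∩ {g > 2^k β}} g`. Each piece is controlled
by the reverse weak-type inequality `∫_{Q ∩ {g > λ}} g ≤ 8^n λ |Q ∩ {M g ≥ λ}|`, valid once `λ`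
exceeds the average of `g` over the doubled cube: a stopping-time choice of radii around the
Lebesgue points of `{g > λ}` gives cubes of radius at most `2r`, each meeting `Q` in at least a
`2^{-n}` fraction of its volume, and the Vitali covering lemma selects disjoint ones whose
quadruples cover. Summing the dyadic levels, `∑ 2^k β |Q ∩ {M g ≥ 2^k β}| ≤ 2 ∫_Q M g`, so any
`β > (2 + 2·8^n) |Q|⁻¹ ∫_Q M g` satisfies the Luxemburg condition.
-/

open MeasureTheory Metric Set
open scoped ENNReal

/-- The normalized Luxemburg (Orlicz) average
`‖f‖_{Φ,Q} = inf{α > 0 : (1/|Q|)∫_Q Φ(|f|/α) ≤ 1}`. -/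
noncomputable def orliczAvg {n : ℕ} (Φ : ℝ → ℝ) (f : (Fin n → ℝ) → ℝ)
    (Q : Set (Fin n → ℝ)) : ℝ :=
  sInf {α : ℝ | 0 < α ∧ ∫⁻ y in Q, ENNReal.ofReal (Φ (|f y| / α)) ≤ volume Q}

/-- The normalized `L log L` average over `Q`, with `Φ(t) = t·log(e+t)`. -/
noncomputable def llogl {n : ℕ} (f : (Fin n → ℝ) → ℝ) (Q : Set (Fin n → ℝ)) : ℝ :=
  orliczAvg (fun t => t * Real.log (Real.exp 1 + t)) f Q

open Filter Topology

section Cubes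

variable {n : ℕ}

lemma volume_closedBall_eq (x : Fin n → ℝ) {ρ : ℝ} (hρ : 0 ≤ ρ) :
    volume (closedBall x ρ) = ENNReal.ofReal ((2 * ρ) ^ n) := by
  rw [Real.volume_pi_closedBall x hρ, Fintype.card_fin]

lemma volume_closedBall_le_two_pow_mul_volume_inter {c x : Fin n → ℝ} {r ρ : ℝ}
    (hρ : 0 < ρ) (hρr : ρ ≤ 2 * r) (hx : x ∈ closedBall c r) :
    volume (closedBall x ρ) ≤ 2 ^ n * volume (closedBall x ρ ∩ closedBall c r) := by
  have hr : 0 ≤ r := by linarith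
  have hinter : closedBall x ρ ∩ closedBall c r =
      univ.pi fun i => Icc (max (x i - ρ) (c i - r)) (min (x i + ρ) (c i + r)) := by
    simp only [closedBall_pi _ hρ.le, closedBall_pi _ hr, Real.closedBall_eq_Icc,
      ← pi_inter_distrib, Icc_inter_Icc]
  have hside : ∀ i, ENNReal.ofReal ρ ≤
      volume (Icc (max (x i - ρ) (c i - r)) (min (x i + ρ) (c i + r))) := by
    intro i
    have hxc := abs_le.mp ((dist_le_pi_dist x c i).trans (mem_closedBall.mp hx))
    rw [Real.volume_Icc]
    refine ENNReal.ofReal_le_ofReal ?_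
    rw [le_sub_iff_add_le, le_min_iff, add_max, max_le_iff, max_le_iff]
    refine ⟨⟨?_, ?_⟩, ?_, ?_⟩ <;> linarith [hxc.1, hxc.2]
  calc volume (closedBall x ρ) = 2 ^ n * ENNReal.ofReal ρ ^ n := by
        rw [volume_closedBall_eq x hρ.le, mul_pow, ENNReal.ofReal_mul (by positivity),
          ENNReal.ofReal_pow hρ.le, ENNReal.ofReal_pow zero_le_two, ENNReal.ofReal_ofNat]
    _ ≤ 2 ^ n * volume (closedBall x ρ ∩ closedBall c r) := by
        rw [hinter, volume_pi_pi]
        gcongr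
        calc ENNReal.ofReal ρ ^ n = ∏ _i : Fin n, ENNReal.ofReal ρ := by simp
          _ ≤ _ := Finset.prod_le_prod' fun i _ => hside i

end Cubes

section Maximal

variable {n : ℕ} (g : (Fin n → ℝ) → ℝ≥0∞)

lemma le_maximal (c : Fin n → ℝ) {ρ : ℝ} (hρ : 0 < ρ) {x : Fin n → ℝ}
    (hx : x ∈ closedBall c ρ) :
    (volume (closedBall c ρ))⁻¹ * ∫⁻ y in closedBall c ρ, g y ≤ maximal g x :=
  le_iSup₂_of_le c ρ <| le_iSup₂_of_le (f := fun _ _ => _) hρ hx le_rfl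

lemma lowerSemicontinuous_maximal : LowerSemicontinuous (maximal g) := by
  intro x t ht
  simp only [maximal, lt_iSup_iff] at ht
  obtain ⟨c, ρ, hρ, hxc, ht⟩ := ht
  -- enlarging the ball slightly changes its volume continuously and can only increase the
  -- integral, so the average stays above `t` on a neighbourhood of `x`
  have hvol : Tendsto (fun δ => volume (closedBall c (ρ + δ))) (𝓝[>] 0)
      (𝓝 (volume (closedBall c ρ))) := by
    rw [volume_closedBall_eq c hρ.le]
    have hpow : Tendsto (fun δ : ℝ => (2 * (ρ + δ)) ^ n) (𝓝[>] 0) (𝓝 ((2 * ρ) ^ n)) :=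
      (Continuous.tendsto' (by fun_prop) 0 _ (by simp)).mono_left nhdsWithin_le_nhds
    refine Tendsto.congr' ?_ (ENNReal.tendsto_ofReal hpow)
    filter_upwards [self_mem_nhdsWithin] with δ hδ
    rw [volume_closedBall_eq c (by linarith [mem_Ioi.mp hδ])]
  have hlim := ENNReal.Tendsto.mul_const (tendsto_inv_iff.mpr hvol)
    (a := (volume (closedBall c ρ))⁻¹) (b := ∫⁻ y in closedBall c ρ, g y)
    (Or.inl (ENNReal.inv_ne_zero.mpr measure_closedBall_lt_top.ne))
  obtain ⟨δ, hδt, hδ : 0 < δ⟩ :=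
    ((hlim.eventually (lt_mem_nhds ht)).and self_mem_nhdsWithin).exists
  filter_upwards [ball_mem_nhds x hδ] with x' hx'
  have hx'c : x' ∈ closedBall c (ρ + δ) := by
    rw [mem_closedBall]
    linarith [dist_triangle x' x c, mem_ball.mp hx', mem_closedBall.mp hxc]
  refine hδt.trans_le (le_trans ?_ (le_maximal g c (by positivity) hx'c))
  gcongr
  linarith

lemma measurable_maximal : Measurable (maximal g) :=
  (lowerSemicontinuous_maximal g).measurable

lemma setLIntegral_le_setLIntegral_maximal (c : Fin n → ℝ) {r : ℝ} (hr : 0 < r) :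
    ∫⁻ y in closedBall c r, g y ≤ ∫⁻ x in closedBall c r, maximal g x := by
  have hQ0 : volume (closedBall c r) ≠ 0 := (measure_closedBall_pos _ _ hr).ne'
  calc ∫⁻ y in closedBall c r, g y
      = ∫⁻ _ in closedBall c r, (volume (closedBall c r))⁻¹ * ∫⁻ y in closedBall c r, g y := by
        rw [setLIntegral_const, mul_comm, ← mul_assoc,
          ENNReal.mul_inv_cancel hQ0 measure_closedBall_lt_top.ne, one_mul]
    _ ≤ ∫⁻ x in closedBall c r, maximal g x :=
        setLIntegral_mono' measurableSet_closedBall fun x hx => le_maximal g c hr hx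

lemma closedBall_subset_setOf_le_maximal {x : Fin n → ℝ} {ρ : ℝ} (hρ : 0 < ρ) {l : ℝ≥0∞}
    (hl : l * volume (closedBall x ρ) ≤ ∫⁻ y in closedBall x ρ, g y) :
    closedBall x ρ ⊆ {y | l ≤ maximal g y} := by
  intro y hy
  refine le_trans ?_ (le_maximal g x hρ hy)
  rw [mul_comm, ← div_eq_mul_inv]
  exact (ENNReal.le_div_iff_mul_le (Or.inl (measure_closedBall_pos _ _ hρ).ne')
    (Or.inl measure_closedBall_lt_top.ne)).mpr hl

end Maximal

lemma exists_mem_forall_two_mul_lt_notMem {T : Set ℝ} (hne : T.Nonempty) (hbdd : BddAbove T)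
    (hpos : ∀ ρ ∈ T, 0 < ρ) : ∃ ρ ∈ T, ∀ ρ', 2 * ρ < ρ' → ρ' ∉ T := by
  obtain ⟨ρ₀, hρ₀⟩ := hne
  have hs : 0 < sSup T := (hpos ρ₀ hρ₀).trans_le (le_csSup hbdd hρ₀)
  obtain ⟨ρ, hρT, hρ⟩ := exists_lt_of_lt_csSup ⟨ρ₀, hρ₀⟩ (half_lt_self hs)
  exact ⟨ρ, hρT, fun ρ' hρ' hρ'T => by linarith [le_csSup hbdd hρ'T]⟩

section Stopping

variable {n : ℕ} {g : (Fin n → ℝ) → ℝ≥0∞}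

lemma ae_tendsto_setLIntegral_div_volume_closedBall (hg : AEMeasurable g)
    (hgi : ∫⁻ y, g y ≠ ∞) :
    ∀ᵐ x, Tendsto (fun ρ => (∫⁻ y in closedBall x ρ, g y) / volume (closedBall x ρ))
      (𝓝[>] 0) (𝓝 (g x)) := by
  filter_upwards [(IsUnifLocDoublingMeasure.vitaliFamily volume 1).ae_tendsto_lintegral_div hg hgi]
    with x hx
  refine hx.comp (IsUnifLocDoublingMeasure.tendsto_closedBall_filterAt volume (fun _ => x) id
    tendsto_id ?_)
  filter_upwards [self_mem_nhdsWithin] with ρ hρ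
  exact mem_closedBall_self (by simpa using (mem_Ioi.mp hρ).le)

lemma exists_stopping_radius {c x : Fin n → ℝ} {R : ℝ} {l : ℝ≥0∞}
    (hx : Tendsto (fun ρ => (∫⁻ y in closedBall x ρ, g y) / volume (closedBall x ρ))
      (𝓝[>] 0) (𝓝 (g x)))
    (hlx : l < g x) (hmass : ∫⁻ y, g y < l * volume (closedBall c R)) :
    ∃ ρ, 0 < ρ ∧ ρ ≤ R ∧ l * volume (closedBall x ρ) ≤ ∫⁻ y in closedBall x ρ, g y ∧
      ∀ ρ', 2 * ρ < ρ' → ∫⁻ y in closedBall x ρ', g y < l * volume (closedBall x ρ') := by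
  set T := {ρ | 0 < ρ ∧ l * volume (closedBall x ρ) ≤ ∫⁻ y in closedBall x ρ, g y}
  have hT_ne : T.Nonempty := by
    obtain ⟨ρ, hlρ, hρ⟩ := ((hx.eventually (lt_mem_nhds hlx)).and self_mem_nhdsWithin).exists
    refine ⟨ρ, hρ, ((ENNReal.lt_div_iff_mul_lt ?_ ?_).mp hlρ).le⟩
    · exact Or.inl (measure_closedBall_pos _ _ hρ).ne'
    · exact Or.inl measure_closedBall_lt_top.ne
  have hT_lt : ∀ ρ ∈ T, ρ < R := by
    intro ρ ⟨hρ, hlρ⟩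
    by_contra! hRρ
    have hvol : volume (closedBall c R) ≤ volume (closedBall x ρ) := by
      rcases lt_or_ge R 0 with hR | hR
      · simp [closedBall_eq_empty.mpr hR]
      rw [volume_closedBall_eq c hR, volume_closedBall_eq x hρ.le]
      gcongr
    exact (hmass.trans_le (by gcongr)).not_ge (hlρ.trans (setLIntegral_le_lintegral _ _))
  obtain ⟨ρ, ⟨hρ, hlρ⟩, hmax⟩ :=
    exists_mem_forall_two_mul_lt_notMem hT_ne ⟨R, fun ρ hρ => (hT_lt ρ hρ).le⟩ fun _ h => h.1
  refine ⟨ρ, hρ, (hT_lt ρ ⟨hρ, hlρ⟩).le, hlρ, fun ρ' hρ' => ?_⟩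
  have := hmax ρ' hρ'
  simp only [T, mem_ofPred_eq, not_and, not_le] at this
  exact this (by linarith)

end Stopping

section ReverseWeakType

variable {n : ℕ} {g : (Fin n → ℝ) → ℝ≥0∞} {c : Fin n → ℝ} {r : ℝ} {l : ℝ≥0∞}

lemma setLIntegral_le_of_stopping_radii {E : Set (Fin n → ℝ)} (hEQ : E ⊆ closedBall c r)
    {ρ : (Fin n → ℝ) → ℝ} (hρ : ∀ x ∈ E, 0 < ρ x ∧ ρ x ≤ 2 * r)
    (hlow : ∀ x ∈ E, l * volume (closedBall x (ρ x)) ≤ ∫⁻ y in closedBall x (ρ x), g y)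
    (hup : ∀ x ∈ E, ∫⁻ y in closedBall x (4 * ρ x), g y ≤ l * volume (closedBall x (4 * ρ x))) :
    ∫⁻ y in E, g y ≤ 8 ^ n * l * volume ({x | l ≤ maximal g x} ∩ closedBall c r) := by
  obtain ⟨u, huE, hdisj, hcover⟩ :=
    Vitali.exists_disjoint_subfamily_covering_enlargement_closedBall E id ρ (2 * r)
      (fun x hx => (hρ x hx).2) 4 (by norm_num)
  simp only [id] at hdisj hcover
  have hu : u.Countable := hdisj.countable_of_nonempty_interior fun x hx =>
    ⟨x, ball_subset_interior_closedBall (mem_ball_self (hρ x (huE hx)).1)⟩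
  have : Countable u := hu.to_subtype
  have hball : ∀ x ∈ E, l * volume (closedBall x (4 * ρ x)) ≤
      8 ^ n * l * volume (closedBall x (ρ x) ∩ closedBall c r) := by
    intro x hx
    have h4 : volume (closedBall x (4 * ρ x)) = 4 ^ n * volume (closedBall x (ρ x)) := by
      rw [volume_closedBall_eq x (by linarith [(hρ x hx).1]),
        volume_closedBall_eq x (hρ x hx).1.le, ← ENNReal.ofReal_ofNat 4, ← ENNReal.ofReal_pow
        (by norm_num), ← ENNReal.ofReal_mul (by positivity), ← mul_pow]
      ring_nf
    calc l * volume (closedBall x (4 * ρ x)) = 4 ^ n * l * volume (closedBall x (ρ x)) := by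
          rw [h4]; ring
      _ ≤ 4 ^ n * l * (2 ^ n * volume (closedBall x (ρ x) ∩ closedBall c r)) := by
          gcongr
          exact volume_closedBall_le_two_pow_mul_volume_inter (hρ x hx).1 (hρ x hx).2 (hEQ hx)
      _ = 8 ^ n * l * volume (closedBall x (ρ x) ∩ closedBall c r) := by
          rw [show (8 : ℝ≥0∞) = 4 * 2 by norm_num, mul_pow]; ring
  calc ∫⁻ y in E, g y ≤ ∫⁻ y in ⋃ x : u, closedBall (x : Fin n → ℝ) (4 * ρ x), g y := by
        refine lintegral_mono_set fun y hy => ?_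
        obtain ⟨x, hxu, hyx⟩ := hcover y hy
        exact mem_iUnion.mpr ⟨⟨x, hxu⟩, hyx (mem_closedBall_self (hρ y hy).1.le)⟩
    _ ≤ ∑' x : u, ∫⁻ y in closedBall (x : Fin n → ℝ) (4 * ρ x), g y := lintegral_iUnion_le _ _
    _ ≤ ∑' x : u, 8 ^ n * l * volume (closedBall (x : Fin n → ℝ) (ρ x) ∩ closedBall c r) :=
        ENNReal.tsum_le_tsum fun x => (hup x (huE x.2)).trans (hball x (huE x.2))
    _ = 8 ^ n * l * volume (⋃ x ∈ u, closedBall x (ρ x) ∩ closedBall c r) := by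
        rw [ENNReal.tsum_mul_left, measure_biUnion hu
          (hdisj.mono fun _ => inter_subset_left)
          fun _ _ => measurableSet_closedBall.inter measurableSet_closedBall]
    _ ≤ 8 ^ n * l * volume ({x | l ≤ maximal g x} ∩ closedBall c r) := by
        gcongr
        refine iUnion₂_subset fun x hx => inter_subset_inter_left _ ?_
        exact closedBall_subset_setOf_le_maximal g (hρ x (huE hx)).1 (hlow x (huE hx))

lemma setLIntegral_superlevel_le_volume_maximal (hg : AEMeasurable g) (hgi : ∫⁻ y, g y ≠ ∞)
    (hmass : ∫⁻ y, g y < l * volume (closedBall c (2 * r))) :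
    ∫⁻ y in {y | l < g y} ∩ closedBall c r, g y ≤
      8 ^ n * l * volume ({x | l ≤ maximal g x} ∩ closedBall c r) := by
  set L := {x | Tendsto (fun ρ => (∫⁻ y in closedBall x ρ, g y) / volume (closedBall x ρ))
      (𝓝[>] 0) (𝓝 (g x))}
  have hL : L =ᵐ[volume] univ :=
    ae_eq_univ.mpr (ae_tendsto_setLIntegral_div_volume_closedBall hg hgi)
  have hradius : ∀ x ∈ {y | l < g y} ∩ closedBall c r ∩ L, ∃ ρ, (0 < ρ ∧ ρ ≤ 2 * r) ∧
      l * volume (closedBall x ρ) ≤ ∫⁻ y in closedBall x ρ, g y ∧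
      ∫⁻ y in closedBall x (4 * ρ), g y ≤ l * volume (closedBall x (4 * ρ)) := by
    rintro x ⟨⟨hlx, -⟩, hxL⟩
    obtain ⟨ρ, hρ, hρr, hlow, hup⟩ := exists_stopping_radius hxL hlx hmass
    exact ⟨ρ, ⟨hρ, hρr⟩, hlow, (hup _ (by linarith)).le⟩
  choose! ρ hρ hlow hup using hradius
  calc ∫⁻ y in {y | l < g y} ∩ closedBall c r, g y
      = ∫⁻ y in {y | l < g y} ∩ closedBall c r ∩ L, g y :=
        setLIntegral_congr (inter_ae_eq_left_of_ae_eq_univ hL).symm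
    _ ≤ _ := setLIntegral_le_of_stopping_radii (fun x hx => hx.1.2) hρ hlow hup

end ReverseWeakType

lemma exists_mul_log_exp_one_add_le {s : ℝ} (hs : 0 ≤ s) :
    ∃ m : ℕ, (∀ k < m, (2 : ℝ) ^ k < s) ∧ s * Real.log (Real.exp 1 + s) ≤ (2 + m) * s := by
  have hex : ∃ m : ℕ, s ≤ 2 ^ m := pow_unbounded_of_one_lt s one_lt_two |>.imp fun _ => le_of_lt
  refine ⟨Nat.find hex, fun k hk => not_le.mp (Nat.find_min hex hk), ?_⟩
  set m := Nat.find hex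
  have hsm : s ≤ 2 ^ m := Nat.find_spec hex
  have hlog : Real.log (Real.exp 1 + s) ≤ 2 + m := by
    have h1 : Real.exp 1 + s ≤ Real.exp 1 * 2 ^ (m + 1) := by
      have : 1 ≤ Real.exp 1 := Real.one_le_exp zero_le_one
      have : (1 : ℝ) ≤ 2 ^ m := one_le_pow₀ one_le_two
      rw [pow_succ]; nlinarith
    calc Real.log (Real.exp 1 + s) ≤ Real.log (Real.exp 1 * 2 ^ (m + 1)) :=
          Real.log_le_log (by positivity) h1
      _ = 1 + (m + 1) * Real.log 2 := by
          rw [Real.log_mul (by positivity) (by positivity), Real.log_exp, Real.log_pow]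
          push_cast; ring
      _ ≤ 2 + m := by nlinarith [Real.log_two_lt_d9]
  nlinarith

lemma ofReal_mul_ofReal_mul_log_le {α t : ℝ} (hα : 0 < α) (ht : 0 ≤ t) :
    ENNReal.ofReal α * ENNReal.ofReal (t / α * Real.log (Real.exp 1 + t / α)) ≤
      2 * ENNReal.ofReal t +
        ∑' k : ℕ, if 2 ^ k * ENNReal.ofReal α < ENNReal.ofReal t then ENNReal.ofReal t else 0 := by
  obtain ⟨m, hm, hlog⟩ := exists_mul_log_exp_one_add_le (div_nonneg ht hα.le)
  have hterm : ∀ k < m, 2 ^ k * ENNReal.ofReal α < ENNReal.ofReal t := by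
    intro k hk
    have := hm k hk
    rw [lt_div_iff₀ hα] at this
    rw [← ENNReal.ofReal_ofNat 2, ← ENNReal.ofReal_pow zero_le_two,
      ← ENNReal.ofReal_mul (by positivity)]
    exact (ENNReal.ofReal_lt_ofReal_iff ((by positivity : (0 : ℝ) < 2 ^ k * α).trans this)).mpr
      this
  calc ENNReal.ofReal α * ENNReal.ofReal (t / α * Real.log (Real.exp 1 + t / α))
      ≤ ENNReal.ofReal ((2 + m) * t) := by
        rw [← ENNReal.ofReal_mul hα.le]
        refine ENNReal.ofReal_le_ofReal ?_
        calc α * (t / α * Real.log (Real.exp 1 + t / α)) ≤ α * ((2 + m) * (t / α)) := by gcongr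
          _ = (2 + m) * t := by field_simp
    _ = 2 * ENNReal.ofReal t + ∑ k ∈ Finset.range m, ENNReal.ofReal t := by
        rw [add_mul, ENNReal.ofReal_add (by positivity) (by positivity), ENNReal.ofReal_mul
          zero_le_two, ENNReal.ofReal_mul (by positivity)]
        simp
    _ ≤ _ := by
        gcongr
        refine (Finset.sum_congr rfl fun k hk => ?_).trans_le (ENNReal.sum_le_tsum _)
        rw [if_pos (hterm k (Finset.mem_range.mp hk))]

lemma tsum_two_pow_mul_ite_le (β M : ℝ≥0∞) :
    ∑' k : ℕ, (if 2 ^ k * β ≤ M then 2 ^ k * β else 0) ≤ 2 * M := by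
  refine ENNReal.tsum_le_of_sum_range_le fun N => ?_
  rw [← Finset.sum_filter]
  set F := (Finset.range N).filter fun k => 2 ^ k * β ≤ M
  rcases F.eq_empty_or_nonempty with hF | hF
  · simp [hF]
  have hK : F.max' hF ∈ F := F.max'_mem hF
  calc ∑ k ∈ F, 2 ^ k * β = ((∑ k ∈ F, 2 ^ k : ℕ) : ℝ≥0∞) * β := by
        push_cast; rw [Finset.sum_mul]
    _ ≤ ((2 ^ (F.max' hF + 1) : ℕ) : ℝ≥0∞) * β := by
        gcongr
        exact (Nat.geomSum_lt le_rfl fun k hk => Nat.lt_succ_of_le (F.le_max' k hk)).le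
    _ = 2 * (2 ^ F.max' hF * β) := by push_cast; ring
    _ ≤ 2 * M := by gcongr; exact (Finset.mem_filter.mp hK).2

lemma tsum_two_pow_mul_measure_le_lintegral {X : Type*} [MeasurableSpace X] (μ : Measure X)
    {F : X → ℝ≥0∞} (hF : Measurable F) (β : ℝ≥0∞) (s : Set X) :
    ∑' k : ℕ, 2 ^ k * β * μ ({x | 2 ^ k * β ≤ F x} ∩ s) ≤ 2 * ∫⁻ x in s, F x ∂μ := by
  have hlevel : ∀ k : ℕ, MeasurableSet {x | 2 ^ k * β ≤ F x} :=
    fun k => measurableSet_le measurable_const hF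
  calc ∑' k : ℕ, 2 ^ k * β * μ ({x | 2 ^ k * β ≤ F x} ∩ s)
      = ∑' k : ℕ, ∫⁻ x in s, {x | 2 ^ k * β ≤ F x}.indicator (fun _ => 2 ^ k * β) x ∂μ := by
        refine tsum_congr fun k => ?_
        rw [lintegral_indicator_const (hlevel k), Measure.restrict_apply (hlevel k)]
    _ = ∫⁻ x in s, ∑' k : ℕ, {x | 2 ^ k * β ≤ F x}.indicator (fun _ => 2 ^ k * β) x ∂μ :=
        (lintegral_tsum fun k => (measurable_const.indicator (hlevel k)).aemeasurable).symm
    _ ≤ ∫⁻ x in s, 2 * F x ∂μ := by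
        refine lintegral_mono fun x => ?_
        simpa only [indicator_apply, mem_ofPred_eq] using tsum_two_pow_mul_ite_le β (F x)
    _ = 2 * ∫⁻ x in s, F x ∂μ := lintegral_const_mul 2 hF

lemma ofReal_mul_setLIntegral_mul_log_le_maximal {n : ℕ} {c : Fin n → ℝ} {r : ℝ} (hr : 0 < r)
    {f : (Fin n → ℝ) → ℝ} (hf : IntegrableOn f (closedBall c r)) {α : ℝ} (hα : 0 < α)
    (hmass : ∫⁻ y in closedBall c r, ‖f y‖ₑ < ENNReal.ofReal α * volume (closedBall c (2 * r))) :
    ENNReal.ofReal α * ∫⁻ y in closedBall c r,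
        ENNReal.ofReal (|f y| / α * Real.log (Real.exp 1 + |f y| / α)) ≤
      (2 + 2 * 8 ^ n) * ∫⁻ x in closedBall c r,
        maximal ((closedBall c r).indicator fun y => (‖f y‖₊ : ℝ≥0∞)) x := by
  set Q := closedBall c r
  set g := Q.indicator fun y => (‖f y‖₊ : ℝ≥0∞)
  set β := ENNReal.ofReal α
  have hg : AEMeasurable g :=
    (aemeasurable_indicator_iff measurableSet_closedBall).mpr hf.aestronglyMeasurable.enorm
  have hgi : ∫⁻ y, g y = ∫⁻ y in Q, ‖f y‖ₑ := lintegral_indicator measurableSet_closedBall _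
  have hgQ : ∀ y ∈ Q, g y = ENNReal.ofReal |f y| := fun y hy => by
    rw [show g y = _ from indicator_of_mem hy _, ← Real.enorm_eq_ofReal_abs, enorm_eq_nnnorm]
  have hlevel : ∀ k : ℕ, ∫⁻ y in Q, {y | 2 ^ k * β < g y}.indicator g y ≤
      8 ^ n * (2 ^ k * β * volume ({x | 2 ^ k * β ≤ maximal g x} ∩ Q)) := by
    intro k
    have hmass_k : ∫⁻ y, g y < 2 ^ k * β * volume (closedBall c (2 * r)) := by
      rw [hgi]
      refine hmass.trans_le ?_
      gcongr
      exact le_mul_of_one_le_left' (one_le_pow₀ one_le_two)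
    calc ∫⁻ y in Q, {y | 2 ^ k * β < g y}.indicator g y
        ≤ ∫⁻ y in {y | 2 ^ k * β < g y} ∩ Q, g y := by
          rw [← Measure.restrict_restrict' measurableSet_closedBall]
          exact lintegral_indicator_le g _
      _ ≤ _ := by
          rw [← mul_assoc]
          exact setLIntegral_superlevel_le_volume_maximal hg (hgi ▸ hf.hasFiniteIntegral.ne) hmass_k
  have hterm : ∀ k : ℕ, AEMeasurable ({y | 2 ^ k * β < g y}.indicator g) (volume.restrict Q) :=
    fun k => hg.restrict.indicator₀ (nullMeasurableSet_lt aemeasurable_const hg.restrict)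
  calc β * ∫⁻ y in Q, ENNReal.ofReal (|f y| / α * Real.log (Real.exp 1 + |f y| / α))
      = ∫⁻ y in Q, β * ENNReal.ofReal (|f y| / α * Real.log (Real.exp 1 + |f y| / α)) :=
        (lintegral_const_mul' _ _ ENNReal.ofReal_ne_top).symm
    _ ≤ ∫⁻ y in Q, 2 * g y + ∑' k : ℕ, {y | 2 ^ k * β < g y}.indicator g y := by
        refine setLIntegral_mono' measurableSet_closedBall fun y hy => ?_
        simpa only [indicator_apply, mem_ofPred_eq, hgQ y hy] using
          ofReal_mul_ofReal_mul_log_le hα (abs_nonneg (f y))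
    _ = 2 * (∫⁻ y in Q, g y) + ∑' k : ℕ, ∫⁻ y in Q, {y | 2 ^ k * β < g y}.indicator g y := by
        rw [lintegral_add_left' (hg.restrict.const_mul 2), lintegral_const_mul' _ _ (by simp),
          lintegral_tsum hterm]
    _ ≤ 2 * (∫⁻ x in Q, maximal g x) +
          8 ^ n * ∑' k : ℕ, 2 ^ k * β * volume ({x | 2 ^ k * β ≤ maximal g x} ∩ Q) := by
        rw [← ENNReal.tsum_mul_left]
        gcongr ?_ + ?_
        · exact mul_le_mul_right (setLIntegral_le_setLIntegral_maximal g c hr) 2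
        · exact ENNReal.tsum_le_tsum hlevel
    _ ≤ 2 * (∫⁻ x in Q, maximal g x) + 8 ^ n * (2 * ∫⁻ x in Q, maximal g x) := by
        gcongr
        exact tsum_two_pow_mul_measure_le_lintegral volume (measurable_maximal g) β Q
    _ = (2 + 2 * 8 ^ n) * ∫⁻ x in Q, maximal g x := by ring

lemma orliczAvg_le_of_forall_lt {n : ℕ} {Φ : ℝ → ℝ} {f : (Fin n → ℝ) → ℝ}
    {Q : Set (Fin n → ℝ)} {t : ℝ} (ht : 0 ≤ t)
    (h : ∀ α, t < α → ∫⁻ y in Q, ENNReal.ofReal (Φ (|f y| / α)) ≤ volume Q) :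
    orliczAvg Φ f Q ≤ t :=
  le_of_forall_gt_imp_ge_of_dense fun α hα =>
    csInf_le ⟨0, fun _ hβ => hβ.1.le⟩ ⟨ht.trans_lt hα, h α hα⟩

lemma llogl_closedBall_le {n : ℕ} {c : Fin n → ℝ} {r : ℝ} (hr : 0 < r)
    {f : (Fin n → ℝ) → ℝ} (hf : IntegrableOn f (closedBall c r))
    (hA : ∫⁻ x in closedBall c r,
      maximal ((closedBall c r).indicator fun y => (‖f y‖₊ : ℝ≥0∞)) x ≠ ∞) :
    llogl f (closedBall c r) ≤ (2 + 2 * 8 ^ n) * (∫⁻ x in closedBall c r,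
      maximal ((closedBall c r).indicator fun y => (‖f y‖₊ : ℝ≥0∞)) x).toReal / (2 * r) ^ n := by
  set Q := closedBall c r
  set g := Q.indicator fun y => (‖f y‖₊ : ℝ≥0∞)
  set A := ∫⁻ x in Q, maximal g x
  have hC : ENNReal.ofReal (2 + 2 * 8 ^ n) = 2 + 2 * 8 ^ n := by
    rw [ENNReal.ofReal_add zero_le_two (by positivity), ENNReal.ofReal_mul zero_le_two,
      ENNReal.ofReal_pow (by norm_num)]
    norm_num
  refine orliczAvg_le_of_forall_lt (by positivity) fun α hα => ?_
  have hα0 : 0 < α := (by positivity : (0 : ℝ) ≤ _).trans_lt hα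
  have hlt : (2 + 2 * 8 ^ n) * A < ENNReal.ofReal α * volume Q := by
    rw [← hC, ← ENNReal.ofReal_toReal hA, ← ENNReal.ofReal_mul (by positivity),
      volume_closedBall_eq c hr.le, ← ENNReal.ofReal_mul hα0.le,
      ENNReal.ofReal_lt_ofReal_iff (by positivity)]
    rwa [div_lt_iff₀ (by positivity)] at hα
  have hmass : ∫⁻ y in Q, ‖f y‖ₑ < ENNReal.ofReal α * volume (closedBall c (2 * r)) :=
    calc ∫⁻ y in Q, ‖f y‖ₑ = ∫⁻ y in Q, g y := by
          rw [setLIntegral_indicator measurableSet_closedBall, inter_self]; rfl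
      _ ≤ A := setLIntegral_le_setLIntegral_maximal g c hr
      _ ≤ (2 + 2 * 8 ^ n) * A := le_mul_of_one_le_left' (by simp [le_add_right])
      _ < ENNReal.ofReal α * volume Q := hlt
      _ ≤ ENNReal.ofReal α * volume (closedBall c (2 * r)) := by
          gcongr
          exact closedBall_subset_closedBall (by linarith)
  refine (ENNReal.mul_le_mul_iff_right (by simpa using hα0) ENNReal.ofReal_ne_top).mp ?_
  exact (ofReal_mul_setLIntegral_mul_log_le_maximal hr hf hα0 hmass).trans hlt.le

/-- Stein's `L log L` estimate: there is a dimensional constant `c_n` such that for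
every cube `Q` and every `f ∈ L¹(Q)`, `‖f‖_{L log L,Q}|Q| ≤ c_n ∫_Q M(fχ_Q)`. -/
theorem stmt15 (n : ℕ) :
    ∃ C : ℝ, 0 < C ∧
      ∀ (c : Fin n → ℝ) (r : ℝ), 0 < r →
      ∀ f : (Fin n → ℝ) → ℝ, IntegrableOn f (closedBall c r) volume →
        ENNReal.ofReal (llogl f (closedBall c r)) * volume (closedBall c r) ≤
          ENNReal.ofReal C *
            ∫⁻ x in closedBall c r,
              maximal ((closedBall c r).indicator fun y => (‖f y‖₊ : ℝ≥0∞)) x := by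
  refine ⟨2 + 2 * 8 ^ n, by positivity, fun c r hr f hf => ?_⟩
  set A := ∫⁻ x in closedBall c r,
    maximal ((closedBall c r).indicator fun y => (‖f y‖₊ : ℝ≥0∞)) x
  rcases eq_or_ne A ∞ with hA | hA
  · rw [hA, ENNReal.mul_top (by simp; positivity)]
    exact le_top
  calc ENNReal.ofReal (llogl f (closedBall c r)) * volume (closedBall c r)
      ≤ ENNReal.ofReal ((2 + 2 * 8 ^ n) * A.toReal / (2 * r) ^ n) *
          ENNReal.ofReal ((2 * r) ^ n) := by
        rw [volume_closedBall_eq c hr.le]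
        gcongr
        exact llogl_closedBall_le hr hf hA
    _ = ENNReal.ofReal (2 + 2 * 8 ^ n) * A := by
        rw [← ENNReal.ofReal_mul (by positivity), div_mul_cancel₀ _ (by positivity),
          ENNReal.ofReal_mul (by positivity), ENNReal.ofReal_toReal hA]
end
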